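/- arXiv:0804.1496 — 8 statements merged into one kernel-verified Lean document; each statement's English description precedes it below -/
import Mathlib

section
/- Let a < b, c ∈ ℝ, and let ε → 0+ be a sequence admitting expansion data (a1,a2,b1,b2,c1,c2). Then: 0 ≤ a1 ≤ 1, with a2 ≤ 0 if a1 = 1 and a2 ≥ 0 if a1 = 0; 0 ≤ b1 ≤ 1, with b2 ≤ 0 if b1 = 1 and b2 ≥ 0 if b1 = 0; |c1| ≤ 1/(b−a)², with c2 ≤ 1/(b−a)³ if c1 = 1/(b−a)², and c2 ≥ 1/(b−a)³ if c1 = −1/(b−a)². -/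
open Filter Asymptotics Set

noncomputable def kk1 (a c ε : ℝ) : ℤ := ⌈a / ε - c⌉
noncomputable def kk2 (b c ε : ℝ) : ℤ := ⌊b / ε - c⌋
noncomputable def NN (a b c ε : ℝ) : ℤ := kk2 b c ε - kk1 a c ε + 1

/-- A positive sequence `ε → 0⁺` admits expansion data `(a1,a2,b1,b2,c1,c2)`
relative to `(a,b,c)` if along the sequence
`ε(c+k1) − a = a1 ε + a2 ε² + o(ε²)`, `b − ε(c+k2) = b1 ε + b2 ε² + o(ε²)`,
and `1/(Nε) = 1/(b−a) + c1 ε + c2 ε² + o(ε²)`. -/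
def AdmitsExpansion (a b c : ℝ) (ε : ℕ → ℝ) (a1 a2 b1 b2 c1 c2 : ℝ) : Prop :=
  (∀ n, 0 < ε n) ∧ Tendsto ε atTop (nhds 0) ∧
  (fun n => ε n * (c + (kk1 a c (ε n) : ℝ)) - a - (a1 * ε n + a2 * ε n ^ 2))
    =o[atTop] (fun n => ε n ^ 2) ∧
  (fun n => b - ε n * (c + (kk2 b c (ε n) : ℝ)) - (b1 * ε n + b2 * ε n ^ 2))
    =o[atTop] (fun n => ε n ^ 2) ∧
  (fun n => 1 / ((NN a b c (ε n) : ℝ) * ε n) - (1 / (b - a) + c1 * ε n + c2 * ε n ^ 2))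
    =o[atTop] (fun n => ε n ^ 2)

open Topology

/-! The remainders `ε (c + k₁) - a` and `b - ε (c + k₂)` lie in `[0, ε]`, hence `N ε` lies in
`[L - ε, L + ε]` with `L = b - a`, and `1 / (N ε)` lies between `1 / (L + ε)` and `1 / (L - ε)`.
Two-term expansions along `ε → 0⁺` respect inequalities lexicographically: if `f ≤ g` then
`f₁ ≤ g₁`, and `f₂ ≤ g₂` when moreover `f₁ = g₁`. Comparing with the expansions of `0`, `ε` and
`1 / (L ± ε) = 1 / L ∓ ε / L² + ε² / L³ + O(ε³)` gives every bound. -/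

section QuadExpansion

variable {α : Type*} {l : Filter α} {ε f g : α → ℝ}

def HasQuadExpansion (l : Filter α) (ε f : α → ℝ) (f0 f1 f2 : ℝ) : Prop :=
  (fun x => f x - (f0 + f1 * ε x + f2 * ε x ^ 2)) =o[l] fun x => ε x ^ 2

lemma hasQuadExpansion_quadratic (l : Filter α) (ε : α → ℝ) (f0 f1 f2 : ℝ) :
    HasQuadExpansion l ε (fun x => f0 + f1 * ε x + f2 * ε x ^ 2) f0 f1 f2 := by
  simp [HasQuadExpansion]

lemma HasQuadExpansion.sub {f0 f1 f2 g0 g1 g2 : ℝ} (hf : HasQuadExpansion l ε f f0 f1 f2)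
    (hg : HasQuadExpansion l ε g g0 g1 g2) :
    HasQuadExpansion l ε (f - g) (f0 - g0) (f1 - g1) (f2 - g2) :=
  (IsLittleO.sub hf hg).congr_left fun x => by simp only [Pi.sub_apply]; ring

lemma nonneg_of_isLittleO_sub_const_mul [l.NeBot] {h : α → ℝ} {c : ℝ}
    (hg : ∀ᶠ x in l, 0 < g x) (hh : ∀ᶠ x in l, 0 ≤ h x)
    (ho : (fun x => h x - c * g x) =o[l] g) : 0 ≤ c := by
  have hlim : Tendsto (fun x => h x / g x) l (𝓝 c) := by
    have := ho.tendsto_div_nhds_zero.add_const c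
    rw [zero_add] at this
    refine this.congr' ?_
    filter_upwards [hg] with x hx
    field_simp
    ring
  exact ge_of_tendsto hlim (by filter_upwards [hg, hh] with x hgx hhx; positivity)

lemma HasQuadExpansion.nonneg_coeffs [l.NeBot] {f1 f2 : ℝ} (hε : Tendsto ε l (𝓝[>] 0))
    (hf : HasQuadExpansion l ε f 0 f1 f2) (hnonneg : 0 ≤ᶠ[l] f) :
    0 ≤ f1 ∧ (f1 = 0 → 0 ≤ f2) := by
  have hpos : ∀ᶠ x in l, 0 < ε x := hε self_mem_nhdsWithin
  have hsq : (fun x => ε x ^ 2) =o[l] ε :=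
    (isLittleO_pow_id one_lt_two).comp_tendsto (tendsto_nhds_of_tendsto_nhdsWithin hε)
  refine ⟨nonneg_of_isLittleO_sub_const_mul hpos hnonneg ?_, fun hf1 => ?_⟩
  · refine ((hf.trans hsq).add (hsq.const_mul_left f2)).congr_left fun x => ?_
    ring
  · refine nonneg_of_isLittleO_sub_const_mul (g := fun x => ε x ^ 2)
      (hpos.mono fun x hx => pow_pos hx 2) hnonneg ?_
    refine hf.congr_left fun x => ?_
    rw [hf1]
    ring

lemma HasQuadExpansion.coeffs_le_of_le [l.NeBot] {f0 f1 f2 g1 g2 : ℝ}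
    (hε : Tendsto ε l (𝓝[>] 0)) (hf : HasQuadExpansion l ε f f0 f1 f2)
    (hg : HasQuadExpansion l ε g f0 g1 g2) (hle : f ≤ᶠ[l] g) :
    f1 ≤ g1 ∧ (f1 = g1 → f2 ≤ g2) := by
  have hsub := hg.sub hf
  rw [sub_self] at hsub
  obtain ⟨h1, h2⟩ := hsub.nonneg_coeffs hε (hle.mono fun x hx => sub_nonneg.2 hx)
  exact ⟨sub_nonneg.1 h1, fun h => sub_nonneg.1 (h2 (sub_eq_zero.2 h.symm))⟩

lemma hasQuadExpansion_one_div_add_mul {L : ℝ} (hL : L ≠ 0) (hε : Tendsto ε l (𝓝 0)) (s : ℝ) :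
    HasQuadExpansion l ε (fun x => 1 / (L + s * ε x)) (1 / L) (-s / L ^ 2) (s ^ 2 / L ^ 3) := by
  have hden : Tendsto (fun x => L + s * ε x) l (𝓝 L) := by
    simpa using (hε.const_mul s).const_add L
  have hrem : Tendsto (fun x => -s ^ 3 * ε x / (L ^ 3 * (L + s * ε x))) l (𝓝 0) := by
    simpa [Pi.div_def] using (hε.const_mul (-s ^ 3)).div (hden.const_mul (L ^ 3)) (by positivity)
  refine (((isBigO_refl (fun x => ε x ^ 2) l).mul_isLittleO ((isLittleO_one_iff ℝ).2 hrem)).congr'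
    ?_ (.of_forall fun x => mul_one _))
  have taylor : ∀ y, L + y ≠ 0 →
      1 / (L + y) - (1 / L + -1 / L ^ 2 * y + 1 / L ^ 3 * y ^ 2) = -y ^ 3 / (L ^ 3 * (L + y)) := by
    intro y hy
    field_simp
    ring
  filter_upwards [hden.eventually_ne hL] with x hx
  linear_combination -taylor (s * ε x) hx

lemma HasQuadExpansion.coeffs_of_mem_Icc [l.NeBot] {f1 f2 : ℝ} (hε : Tendsto ε l (𝓝[>] 0))
    (hf : HasQuadExpansion l ε f 0 f1 f2) (hmem : ∀ᶠ x in l, f x ∈ Icc 0 (ε x)) :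
    (0 ≤ f1 ∧ f1 ≤ 1) ∧ (f1 = 1 → f2 ≤ 0) ∧ (f1 = 0 → 0 ≤ f2) := by
  obtain ⟨hlow1, hlow2⟩ := (hasQuadExpansion_quadratic l ε 0 0 0).coeffs_le_of_le hε hf
    (hmem.mono fun x hx => by simpa using hx.1)
  obtain ⟨hup1, hup2⟩ := hf.coeffs_le_of_le hε (hasQuadExpansion_quadratic l ε 0 1 0)
    (hmem.mono fun x hx => by simpa using hx.2)
  exact ⟨⟨hlow1, hup1⟩, hup2, fun h => hlow2 h.symm⟩

lemma HasQuadExpansion.coeffs_of_one_div_mem_Icc [l.NeBot] {P : α → ℝ} {L c1 c2 : ℝ}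
    (hL : 0 < L) (hε : Tendsto ε l (𝓝[>] 0))
    (hP : ∀ᶠ x in l, P x ∈ Icc (L - ε x) (L + ε x))
    (hf : HasQuadExpansion l ε (fun x => 1 / P x) (1 / L) c1 c2) :
    |c1| ≤ 1 / L ^ 2 ∧ (c1 = 1 / L ^ 2 → c2 ≤ 1 / L ^ 3) ∧
      (c1 = -1 / L ^ 2 → 1 / L ^ 3 ≤ c2) := by
  have hε0 := tendsto_nhds_of_tendsto_nhdsWithin hε
  have hsmall : ∀ᶠ x in l, ε x < L := hε0.eventually_lt_const hL
  obtain ⟨hlow1, hlow2⟩ := (hasQuadExpansion_one_div_add_mul hL.ne' hε0 1).coeffs_le_of_le hε hf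
    (by
      filter_upwards [hP, hsmall] with x hx hxL
      exact one_div_le_one_div_of_le (by linarith [hx.1]) (by linarith [hx.2]))
  obtain ⟨hup1, hup2⟩ := hf.coeffs_le_of_le hε (hasQuadExpansion_one_div_add_mul hL.ne' hε0 (-1))
    (by
      filter_upwards [hP, hsmall] with x hx hxL
      exact one_div_le_one_div_of_le (by linarith) (by linarith [hx.1]))
  simp only [one_pow, neg_neg, neg_one_sq] at hlow1 hlow2 hup1 hup2
  refine ⟨abs_le.2 ⟨by rwa [← neg_div], hup1⟩, hup2, fun h => hlow2 ?_⟩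
  rw [h, neg_div]

end QuadExpansion

lemma mul_add_kk1_sub_mem_Icc {ε : ℝ} (hε : 0 < ε) (a c : ℝ) :
    ε * (c + kk1 a c ε) - a ∈ Icc 0 ε := by
  have hle : a / ε - c ≤ kk1 a c ε := Int.le_ceil _
  have hlt : (kk1 a c ε : ℝ) < a / ε - c + 1 := Int.ceil_lt_add_one _
  rw [div_sub' hε.ne', div_le_iff₀ hε] at hle
  rw [div_sub' hε.ne', div_add_one hε.ne', lt_div_iff₀ hε] at hlt
  constructor <;> nlinarith

lemma sub_mul_add_kk2_mem_Icc {ε : ℝ} (hε : 0 < ε) (b c : ℝ) :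
    b - ε * (c + kk2 b c ε) ∈ Icc 0 ε := by
  have hle : (kk2 b c ε : ℝ) ≤ b / ε - c := Int.floor_le _
  have hlt : b / ε - c < kk2 b c ε + 1 := Int.lt_floor_add_one _
  rw [div_sub' hε.ne', le_div_iff₀ hε] at hle
  rw [div_sub' hε.ne', div_lt_iff₀ hε] at hlt
  constructor <;> nlinarith

lemma NN_mul_eq (a b c ε : ℝ) :
    NN a b c ε * ε = (b - a) + ε - (ε * (c + kk1 a c ε) - a) - (b - ε * (c + kk2 b c ε)) := by
  simp only [NN]
  push_cast
  ring

theorem stmt1 (a b c : ℝ) (hab : a < b) (ε : ℕ → ℝ) (a1 a2 b1 b2 c1 c2 : ℝ)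
    (h : AdmitsExpansion a b c ε a1 a2 b1 b2 c1 c2) :
    (0 ≤ a1 ∧ a1 ≤ 1) ∧ (a1 = 1 → a2 ≤ 0) ∧ (a1 = 0 → 0 ≤ a2) ∧
    (0 ≤ b1 ∧ b1 ≤ 1) ∧ (b1 = 1 → b2 ≤ 0) ∧ (b1 = 0 → 0 ≤ b2) ∧
    |c1| ≤ 1 / (b - a) ^ 2 ∧
    (c1 = 1 / (b - a) ^ 2 → c2 ≤ 1 / (b - a) ^ 3) ∧
    (c1 = -1 / (b - a) ^ 2 → 1 / (b - a) ^ 3 ≤ c2) := by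
  obtain ⟨hpos, hlim, ha, hb, hc⟩ := h
  have hε : Tendsto ε atTop (𝓝[>] 0) := tendsto_nhdsWithin_iff.2 ⟨hlim, .of_forall hpos⟩
  have hA := HasQuadExpansion.coeffs_of_mem_Icc hε (ha.congr_left fun n => by rw [zero_add])
    (.of_forall fun n => mul_add_kk1_sub_mem_Icc (hpos n) a c)
  have hB := HasQuadExpansion.coeffs_of_mem_Icc hε (hb.congr_left fun n => by rw [zero_add])
    (.of_forall fun n => sub_mul_add_kk2_mem_Icc (hpos n) b c)
  have hC := HasQuadExpansion.coeffs_of_one_div_mem_Icc (sub_pos.2 hab) hε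
    (.of_forall fun n => by
      have hk1 := mul_add_kk1_sub_mem_Icc (hpos n) a c
      have hk2 := sub_mul_add_kk2_mem_Icc (hpos n) b c
      rw [NN_mul_eq]
      constructor <;> linarith [hk1.1, hk1.2, hk2.1, hk2.2]) hc
  exact ⟨hA.1, hA.2.1, hA.2.2, hB.1, hB.2.1, hB.2.2, hC.1, hC.2.1, hC.2.2⟩
end

section
/- Let a = −1, b = 1, c = 0, and for each ε > 0 define k1, k2, N accordingly. Then k2 = −k1 and N = 2k2 + 1. Moreover, if a sequence ε → 0+ admits expansion data (a1,a2,b1,b2,c1,c2), then b1 = a1 ∈ [0,1], b2 = a2, c1 = a1/2 − 1/4, c2 = a1²/2 − a1/2 + a2/2 + 1/8, and furthermore a2 ≤ 0 if a1 = 1 and a2 ≥ 0 if a1 = 0. -/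
open Filter Asymptotics Set

/-!
With `a = -1`, `b = 1`, `c = 0` one has `k₂ = ⌊1/ε⌋ = -k₁`, so both endpoint defects
`ε (c + k₁) - a` and `b - ε (c + k₂)` equal the same quantity `F = 1 - ε ⌊1/ε⌋ ∈ [0, ε]`, and
`N ε = 2 + ε - 2F`. Uniqueness of second-order expansions gives `b₁ = a₁` and `b₂ = a₂`; the
bounds `0 ≤ F ≤ ε` give `a₁ ∈ [0, 1]` and the sign of `a₂` at the endpoints; inverting the
expansion of `N ε` gives `c₁` and `c₂`.
-/

open Topology

def HasSecondOrderExpansion {α : Type*} (l : Filter α) (e f : α → ℝ) (c₀ c₁ c₂ : ℝ) :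
    Prop :=
  (fun x => f x - (c₀ + c₁ * e x + c₂ * e x ^ 2)) =o[l] fun x => e x ^ 2

namespace HasSecondOrderExpansion

variable {α : Type*} {l : Filter α} {e f : α → ℝ} {c₀ c₁ c₂ d₀ d₁ d₂ : ℝ}

theorem tendsto (h : HasSecondOrderExpansion l e f c₀ c₁ c₂) (he : Tendsto e l (𝓝 0)) :
    Tendsto f l (𝓝 c₀) := by
  have hrem := h.trans_tendsto (by simpa using he.pow 2)
  have hpoly : Tendsto (fun x => c₀ + c₁ * e x + c₂ * e x ^ 2) l
      (𝓝 (c₀ + c₁ * 0 + c₂ * 0 ^ 2)) :=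
    (tendsto_const_nhds.add (he.const_mul c₁)).add ((he.pow 2).const_mul c₂)
  simpa using hrem.add hpoly

theorem tendsto_sub_sub_div_sq (h : HasSecondOrderExpansion l e f c₀ c₁ c₂)
    (hne : ∀ᶠ x in l, e x ≠ 0) :
    Tendsto (fun x => (f x - c₀ - c₁ * e x) / e x ^ 2) l (𝓝 c₂) := by
  have hsq : ∀ᶠ x in l, e x ^ 2 = 0 → f x - (c₀ + c₁ * e x + c₂ * e x ^ 2) = 0 :=
    hne.mono fun x hx h0 => (hx (pow_eq_zero_iff two_ne_zero |>.1 h0)).elim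
  have hrem := (isLittleO_iff_tendsto' hsq).1 h
  simpa using (hrem.add_const c₂).congr' (hne.mono fun x hx => by field_simp; ring)

theorem tendsto_sub_div (h : HasSecondOrderExpansion l e f c₀ c₁ c₂)
    (he : Tendsto e l (𝓝 0)) (hne : ∀ᶠ x in l, e x ≠ 0) :
    Tendsto (fun x => (f x - c₀) / e x) l (𝓝 c₁) := by
  have hlim := (he.mul (h.tendsto_sub_sub_div_sq hne)).add_const c₁
  simpa using hlim.congr' (hne.mono fun x hx => by field_simp; ring)

theorem unique [l.NeBot] (h : HasSecondOrderExpansion l e f c₀ c₁ c₂)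
    (h' : HasSecondOrderExpansion l e f d₀ d₁ d₂) (he : Tendsto e l (𝓝 0))
    (hne : ∀ᶠ x in l, e x ≠ 0) : c₀ = d₀ ∧ c₁ = d₁ ∧ c₂ = d₂ := by
  obtain rfl := tendsto_nhds_unique (h.tendsto he) (h'.tendsto he)
  obtain rfl := tendsto_nhds_unique (h.tendsto_sub_div he hne) (h'.tendsto_sub_div he hne)
  exact ⟨rfl, rfl,
    tendsto_nhds_unique (h.tendsto_sub_sub_div_sq hne) (h'.tendsto_sub_sub_div_sq hne)⟩

theorem inv (h : HasSecondOrderExpansion l e f c₀ c₁ c₂) (he : Tendsto e l (𝓝 0))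
    (hc₀ : c₀ ≠ 0) :
    HasSecondOrderExpansion l e (fun x => (f x)⁻¹)
      c₀⁻¹ (-c₁ / c₀ ^ 2) (c₁ ^ 2 / c₀ ^ 3 - c₂ / c₀ ^ 2) := by
  set Q := fun x => c₀ + c₁ * e x + c₂ * e x ^ 2
  set P := fun x =>
    c₀⁻¹ + -c₁ / c₀ ^ 2 * e x + (c₁ ^ 2 / c₀ ^ 3 - c₂ / c₀ ^ 2) * e x ^ 2
  -- `P` is the second-order Taylor polynomial of `Q⁻¹`, so `Q * P = 1 + O(e³)`.
  have hQP : (fun x => 1 - Q x * P x) =o[l] fun x => e x ^ 2 := by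
    have hcubic : (fun x => e x * (2 * c₁ * c₂ / c₀ ^ 2 - c₁ ^ 3 / c₀ ^ 3
        + c₂ * (c₂ / c₀ ^ 2 - c₁ ^ 2 / c₀ ^ 3) * e x)) =o[l] fun _ => (1 : ℝ) := by
      rw [isLittleO_one_iff]
      simpa using he.mul (tendsto_const_nhds.add (he.const_mul _))
    refine ((isBigO_refl (fun x => e x ^ 2) l).mul_isLittleO hcubic).congr (fun x => ?_)
      (fun x => mul_one _)
    simp only [Q, P]
    field_simp
    ring
  have hP : P =O[l] fun _ => (1 : ℝ) :=
    ((tendsto_const_nhds.add (he.const_mul _)).add ((he.pow 2).const_mul _)).isBigO_one ℝ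
  have hfinv : (fun x => (f x)⁻¹) =O[l] fun _ => (1 : ℝ) :=
    ((h.tendsto he).inv₀ hc₀).isBigO_one ℝ
  have hnum : (fun x => (Q x - f x) * P x + (1 - Q x * P x)) =o[l] fun x => e x ^ 2 :=
    (h.neg_left.mul_isBigO hP |>.congr (fun x => by simp only [Q]; ring)
      (fun x => mul_one _)).add hQP
  -- `f⁻¹ - P = f⁻¹ ((Q - f) P + (1 - Q P))`
  refine (hfinv.mul_isLittleO hnum).congr' ?_ (.of_forall fun x => one_mul _)
  filter_upwards [(h.tendsto he).eventually_ne hc₀] with x hx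
  simp only [Q, P]
  field_simp
  ring

theorem coeff_mem_Icc_of_nonneg_of_le [l.NeBot] (h : HasSecondOrderExpansion l e f 0 c₁ c₂)
    (he : Tendsto e l (𝓝 0)) (hpos : ∀ᶠ x in l, 0 < e x) (hf₀ : ∀ᶠ x in l, 0 ≤ f x)
    (hfe : ∀ᶠ x in l, f x ≤ e x) :
    c₁ ∈ Icc 0 1 ∧ (c₁ = 1 → c₂ ≤ 0) ∧ (c₁ = 0 → 0 ≤ c₂) := by
  have hne : ∀ᶠ x in l, e x ≠ 0 := hpos.mono fun x hx => hx.ne'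
  have h₁ := h.tendsto_sub_div he hne
  have h₂ := h.tendsto_sub_sub_div_sq hne
  refine ⟨⟨ge_of_tendsto h₁ ?_, le_of_tendsto h₁ ?_⟩, ?_, ?_⟩
  · filter_upwards [hpos, hf₀] with x hx hfx
    exact div_nonneg (by linarith) hx.le
  · filter_upwards [hpos, hfe] with x hx hfx
    exact div_le_one_of_le₀ (by linarith) hx.le
  · rintro rfl
    refine le_of_tendsto h₂ ?_
    filter_upwards [hfe] with x hfx
    exact div_nonpos_of_nonpos_of_nonneg (by linarith) (sq_nonneg _)
  · rintro rfl
    refine ge_of_tendsto h₂ ?_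
    filter_upwards [hf₀] with x hfx
    exact div_nonneg (by linarith) (sq_nonneg _)

end HasSecondOrderExpansion

theorem kk1_neg_one_zero (ε : ℝ) : kk1 (-1) 0 ε = -⌊1 / ε⌋ := by
  rw [kk1, sub_zero, neg_div, Int.ceil_neg]

theorem kk2_one_zero (ε : ℝ) : kk2 1 0 ε = ⌊1 / ε⌋ := by
  rw [kk2, sub_zero]

theorem NN_neg_one_one_zero (ε : ℝ) : NN (-1) 1 0 ε = 2 * ⌊1 / ε⌋ + 1 := by
  rw [NN, kk1_neg_one_zero, kk2_one_zero]
  ring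

theorem one_sub_mul_floor_one_div_nonneg {ε : ℝ} (hε : 0 < ε) :
    0 ≤ 1 - ε * ⌊1 / ε⌋ := by
  have := mul_le_mul_of_nonneg_left (Int.floor_le (1 / ε)) hε.le
  rw [mul_one_div_cancel hε.ne'] at this
  linarith

theorem one_sub_mul_floor_one_div_le {ε : ℝ} (hε : 0 < ε) : 1 - ε * ⌊1 / ε⌋ ≤ ε := by
  have := mul_le_mul_of_nonneg_left (Int.lt_floor_add_one (1 / ε)).le hε.le
  rw [mul_one_div_cancel hε.ne'] at this
  linarith

/-- the case `a = −1`, `b = 1`, `c = 0`. -/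
theorem stmt2 :
    (∀ ε : ℝ, 0 < ε →
      kk2 1 0 ε = -kk1 (-1) 0 ε ∧ NN (-1) 1 0 ε = 2 * kk2 1 0 ε + 1) ∧
    (∀ (ε : ℕ → ℝ) (a1 a2 b1 b2 c1 c2 : ℝ),
      AdmitsExpansion (-1) 1 0 ε a1 a2 b1 b2 c1 c2 →
      b1 = a1 ∧ a1 ∈ Set.Icc (0:ℝ) 1 ∧ b2 = a2 ∧
      c1 = a1 / 2 - 1 / 4 ∧ c2 = a1 ^ 2 / 2 - a1 / 2 + a2 / 2 + 1 / 8 ∧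
      (a1 = 1 → a2 ≤ 0) ∧ (a1 = 0 → 0 ≤ a2)) := by
  refine ⟨fun ε _ => ⟨?_, ?_⟩, ?_⟩
  · rw [kk1_neg_one_zero, kk2_one_zero, neg_neg]
  · rw [NN_neg_one_one_zero, kk2_one_zero]
  rintro ε a1 a2 b1 b2 c1 c2 ⟨hpos, he, hk1, hk2, hN⟩
  have hne : ∀ᶠ n in atTop, ε n ≠ 0 := .of_forall fun n => (hpos n).ne'
  set F : ℕ → ℝ := fun n => 1 - ε n * ⌊1 / ε n⌋
  have hFa : HasSecondOrderExpansion atTop ε F 0 a1 a2 :=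
    hk1.congr_left fun n => by rw [kk1_neg_one_zero]; push_cast; ring
  have hFb : HasSecondOrderExpansion atTop ε F 0 b1 b2 :=
    hk2.congr_left fun n => by rw [kk2_one_zero]; ring
  obtain ⟨-, hab1, hab2⟩ := hFa.unique hFb he hne
  have hNε : HasSecondOrderExpansion atTop ε (fun n => (NN (-1) 1 0 (ε n) : ℝ) * ε n)
      2 (1 - 2 * a1) (-2 * a2) :=
    (hFa.const_mul_left (-2)).congr_left fun n => by
      simp only [F, NN_neg_one_one_zero]; push_cast; ring
  have hNε' : HasSecondOrderExpansion atTop ε (fun n => ((NN (-1) 1 0 (ε n) : ℝ) * ε n)⁻¹)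
      2⁻¹ c1 c2 :=
    hN.congr_left fun n => by norm_num
  obtain ⟨-, hc1, hc2⟩ := hNε'.unique (hNε.inv he two_ne_zero) he hne
  obtain ⟨ha1, ha1_one, ha1_zero⟩ := hFa.coeff_mem_Icc_of_nonneg_of_le he
    (.of_forall hpos) (.of_forall fun n => one_sub_mul_floor_one_div_nonneg (hpos n))
    (.of_forall fun n => one_sub_mul_floor_one_div_le (hpos n))
  refine ⟨hab1.symm, ha1, hab2.symm, by rw [hc1]; ring, by rw [hc2]; ring, ha1_one, ha1_zero⟩
end

section
/- Let a = −1, b = 1, c = 0. For every (a1,a2,b1,b2,c1,c2) ∈ ℝ^6 satisfying b1 = a1 ∈ [0,1], b2 = a2, c1 = a1/2 − 1/4, c2 = a1²/2 − a1/2 + a2/2 + 1/8, a2 ≤ 0 if a1 = 1, and a2 ≥ 0 if a1 = 0, there exists a sequence ε → 0+ that admits the expansion data (a1,a2,b1,b2,c1,c2). -/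
/-!
Take `ε = 1 / x` with `x > 0`. For `a = -1, b = 1, c = 0` one gets `k₂ = ⌊x⌋ = -k₁` and
`N = 2⌊x⌋ + 1`, and each of the three error terms is `ε²` times an explicit expression in `x`
and `Int.fract x`. The first two are `(fract x - a₁) x - a₂`; the third tends to
`a₂/2 + (a₁ - 1/2)²/2 - c₂ = 0` as soon as `(fract x - a₁) x → a₂`. So it suffices to find
`x → ∞` with `fract x = a₁ + a₂/x + o(1/x)`, and `x = n + a₁ + (a₂ - a₁/n)/n` does this; the
conditions at `a₁ ∈ {0, 1}` are exactly what keeps its fractional part in `[0, 1)`.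
-/

open Filter Asymptotics Set

open Topology

lemma kk1_neg_one_zero_inv (x : ℝ) : kk1 (-1) 0 x⁻¹ = -⌊x⌋ := by
  rw [kk1, div_inv_eq_mul, neg_one_mul, sub_zero, Int.ceil_neg]

lemma kk2_one_zero_inv (x : ℝ) : kk2 1 0 x⁻¹ = ⌊x⌋ := by
  rw [kk2, div_inv_eq_mul, one_mul, sub_zero]

lemma NN_neg_one_one_zero_inv (x : ℝ) : NN (-1) 1 0 x⁻¹ = 2 * ⌊x⌋ + 1 := by
  rw [NN, kk1_neg_one_zero_inv, kk2_one_zero_inv]; ring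

lemma lower_error_eq (x a1 a2 : ℝ) (hx : x ≠ 0) :
    x⁻¹ * (0 + (kk1 (-1) 0 x⁻¹ : ℝ)) - -1 - (a1 * x⁻¹ + a2 * x⁻¹ ^ 2)
      = ((Int.fract x - a1) * x - a2) * x⁻¹ ^ 2 := by
  rw [kk1_neg_one_zero_inv, Int.fract]
  push_cast
  field_simp
  ring

lemma upper_error_eq (x b1 b2 : ℝ) (hx : x ≠ 0) :
    1 - x⁻¹ * (0 + (kk2 1 0 x⁻¹ : ℝ)) - (b1 * x⁻¹ + b2 * x⁻¹ ^ 2)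
      = ((Int.fract x - b1) * x - b2) * x⁻¹ ^ 2 := by
  rw [kk2_one_zero_inv, Int.fract]
  field_simp
  ring

/-- With `s = fract x - 1/2` one has `2⌊x⌋ + 1 = 2 (x - s)`; this is the exact third-order
expansion of `x / (2 (x - s))` in powers of `1 / x`. -/
lemma density_error_eq (x a1 a2 : ℝ) (hx : 0 < x) :
    1 / ((NN (-1) 1 0 x⁻¹ : ℝ) * x⁻¹)
        - (1 / (1 - -1) + (a1 / 2 - 1 / 4) * x⁻¹ + (a1 ^ 2 / 2 - a1 / 2 + a2 / 2 + 1 / 8) * x⁻¹ ^ 2)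
      = ((Int.fract x - a1) * x / 2 + (Int.fract x - 1 / 2) ^ 2 / 2
          + (Int.fract x - 1 / 2) ^ 3 / (2 * ⌊x⌋ + 1) - (a2 / 2 + (a1 - 1 / 2) ^ 2 / 2))
        * x⁻¹ ^ 2 := by
  have hN : (0 : ℝ) < 2 * ⌊x⌋ + 1 := by
    have : (0 : ℝ) ≤ ⌊x⌋ := by exact_mod_cast Int.floor_nonneg.2 hx.le
    linarith
  rw [NN_neg_one_one_zero_inv, Int.fract]
  push_cast
  field_simp
  ring

lemma tendsto_fract_of_tendsto_fract_sub_mul {x : ℕ → ℝ} {a1 a2 : ℝ} (hx : Tendsto x atTop atTop)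
    (hfract : Tendsto (fun n => (Int.fract (x n) - a1) * x n) atTop (𝓝 a2)) :
    Tendsto (fun n => Int.fract (x n)) atTop (𝓝 a1) := by
  have hsub : Tendsto (fun n => Int.fract (x n) - a1) atTop (𝓝 0) := by
    simpa using (hfract.mul hx.inv_tendsto_atTop).congr'
      ((hx.eventually_ne_atTop 0).mono fun n hn => by simp only [Pi.inv_apply]; field_simp)
  simpa using hsub.add_const a1

theorem admitsExpansion_inv {x : ℕ → ℝ} {a1 a2 : ℝ} (hx_pos : ∀ n, 0 < x n)
    (hx : Tendsto x atTop atTop)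
    (hfract : Tendsto (fun n => (Int.fract (x n) - a1) * x n) atTop (𝓝 a2)) :
    AdmitsExpansion (-1) 1 0 (fun n => (x n)⁻¹) a1 a2 a1 a2 (a1 / 2 - 1 / 4)
      (a1 ^ 2 / 2 - a1 / 2 + a2 / 2 + 1 / 8) := by
  have hlin : Tendsto (fun n => (Int.fract (x n) - a1) * x n - a2) atTop (𝓝 0) := by
    simpa using hfract.sub_const a2
  have hs := (tendsto_fract_of_tendsto_fract_sub_mul hx hfract).sub_const (1 / 2 : ℝ)
  have hN : Tendsto (fun n => (2 * ⌊x n⌋ + 1 : ℝ)) atTop atTop := by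
    refine ((hx.const_mul_atTop two_pos).atTop_add (hs.const_mul (-2))).congr fun n => ?_
    rw [← Int.self_sub_fract]
    ring
  have hdensity : Tendsto (fun n => (Int.fract (x n) - a1) * x n / 2
      + (Int.fract (x n) - 1 / 2) ^ 2 / 2 + (Int.fract (x n) - 1 / 2) ^ 3 / (2 * ⌊x n⌋ + 1)
      - (a2 / 2 + (a1 - 1 / 2) ^ 2 / 2)) atTop (𝓝 0) := by
    have := (((hfract.div_const 2).add ((hs.pow 2).div_const 2)).add
      ((hs.pow 3).div_atTop hN)).sub_const (a2 / 2 + (a1 - 1 / 2) ^ 2 / 2)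
    rwa [add_zero, sub_self] at this
  refine ⟨fun n => inv_pos.2 (hx_pos n), hx.inv_tendsto_atTop, ?_, ?_, ?_⟩
  · exact isLittleO_iff_exists_eq_mul.2
      ⟨_, hlin, .of_forall fun n => lower_error_eq _ a1 a2 (hx_pos n).ne'⟩
  · exact isLittleO_iff_exists_eq_mul.2
      ⟨_, hlin, .of_forall fun n => upper_error_eq _ a1 a2 (hx_pos n).ne'⟩
  · exact isLittleO_iff_exists_eq_mul.2
      ⟨_, hdensity, .of_forall fun n => density_error_eq _ a1 a2 (hx_pos n)⟩

/-- The `-a1 / n ^ 2` term keeps the value below `1` when `a1 = 1` and `a2 = 0`. -/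
noncomputable def fractTarget (a1 a2 : ℝ) (n : ℕ) : ℝ := a1 + (a2 - a1 / n) / n

lemma tendsto_fractTarget_sub_mul (a1 a2 : ℝ) :
    Tendsto (fun n => (fractTarget a1 a2 n - a1) * n) atTop (𝓝 a2) := by
  have h := (tendsto_const_nhds (x := a2)).sub (tendsto_const_div_atTop_nhds_zero_nat a1)
  refine (sub_zero a2 ▸ h).congr' ((eventually_ne_atTop 0).mono fun n hn => ?_)
  have : (n : ℝ) ≠ 0 := Nat.cast_ne_zero.2 hn
  simp only [fractTarget]
  field_simp
  ring

lemma tendsto_fractTarget (a1 a2 : ℝ) : Tendsto (fractTarget a1 a2) atTop (𝓝 a1) := by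
  have h := ((tendsto_const_nhds (x := a2)).sub
    (tendsto_const_div_atTop_nhds_zero_nat a1)).div_atTop tendsto_natCast_atTop_atTop
  have := h.const_add a1
  rwa [add_zero] at this

lemma eventually_fractTarget_mem_Ico {a1 a2 : ℝ} (ha1 : a1 ∈ Icc (0 : ℝ) 1)
    (h1 : a1 = 1 → a2 ≤ 0) (h0 : a1 = 0 → 0 ≤ a2) :
    ∀ᶠ n in atTop, fractTarget a1 a2 n ∈ Ico (0 : ℝ) 1 := by
  have hlim := tendsto_fractTarget a1 a2
  have hnonneg : ∀ᶠ n in atTop, 0 ≤ fractTarget a1 a2 n := by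
    rcases ha1.1.eq_or_lt with rfl | hpos
    · exact Eventually.of_forall fun n => by
        simpa [fractTarget] using div_nonneg (h0 rfl) n.cast_nonneg
    · exact (hlim.eventually (eventually_gt_nhds hpos)).mono fun n hn => hn.le
  have hlt : ∀ᶠ n in atTop, fractTarget a1 a2 n < 1 := by
    rcases ha1.2.eq_or_lt with rfl | hlt
    · filter_upwards [eventually_gt_atTop 0] with n hn
      have hn' : (0 : ℝ) < n := Nat.cast_pos.2 hn
      have : a2 - 1 / n < 0 := by linarith [h1 rfl, one_div_pos.2 hn']
      simpa [fractTarget] using div_neg_of_neg_of_pos this hn'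
    · exact hlim.eventually (eventually_lt_nhds hlt)
  exact hnonneg.and hlt

lemma exists_tendsto_fract_sub_mul {a1 a2 : ℝ} (ha1 : a1 ∈ Icc (0 : ℝ) 1)
    (h1 : a1 = 1 → a2 ≤ 0) (h0 : a1 = 0 → 0 ≤ a2) :
    ∃ x : ℕ → ℝ, (∀ n, 0 < x n) ∧ Tendsto x atTop atTop ∧
      Tendsto (fun n => (Int.fract (x n) - a1) * x n) atTop (𝓝 a2) := by
  set t := fractTarget a1 a2
  have hnt : Tendsto (fun n : ℕ => n + t n) atTop atTop :=
    tendsto_natCast_atTop_atTop.atTop_add (tendsto_fractTarget a1 a2)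
  have hx : (fun n : ℕ => max (n + t n) 1) =ᶠ[atTop] fun n => n + t n := by
    filter_upwards [hnt.eventually_ge_atTop 1] with n hn
    exact max_eq_left hn
  refine ⟨fun n => max (n + t n) 1, fun n => one_pos.trans_le (le_max_right _ _),
    hnt.congr' hx.symm, ?_⟩
  have hlim : Tendsto (fun n => (t n - a1) * (n + t n)) atTop (𝓝 a2) := by
    have := (tendsto_fractTarget_sub_mul a1 a2).add
      (((tendsto_fractTarget a1 a2).sub_const a1).mul (tendsto_fractTarget a1 a2))
    simpa [mul_add] using this
  refine hlim.congr' ?_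
  filter_upwards [hx, eventually_fractTarget_mem_Ico ha1 h1 h0] with n hxn ht
  rw [hxn, add_comm, Int.fract_add_natCast, Int.fract_eq_self.2 ht]

/-- existence of a sequence `ε → 0⁺` admitting any given
compatible expansion data for `a = −1`, `b = 1`, `c = 0`. -/
theorem stmt3 (a1 a2 b1 b2 c1 c2 : ℝ)
    (hb1 : b1 = a1) (ha1 : a1 ∈ Set.Icc (0:ℝ) 1) (hb2 : b2 = a2)
    (hc1 : c1 = a1 / 2 - 1 / 4) (hc2 : c2 = a1 ^ 2 / 2 - a1 / 2 + a2 / 2 + 1 / 8)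
    (h1 : a1 = 1 → a2 ≤ 0) (h0 : a1 = 0 → 0 ≤ a2) :
    ∃ ε : ℕ → ℝ, AdmitsExpansion (-1) 1 0 ε a1 a2 b1 b2 c1 c2 := by
  subst hb1 hb2 hc1 hc2
  obtain ⟨x, hx_pos, hx, hfract⟩ := exists_tendsto_fract_sub_mul ha1 h1 h0
  exact ⟨_, admitsExpansion_inv hx_pos hx hfract⟩
end

section
/- Let k ∈ ℕ and p, q > k + 1. Then for every f ∈ A_{p,q} and every t > 0 the series T_k f(t) := Σ_{j=1}^∞ j^k f(jt) converges, T_k f ∈ A_{p,q}, and T_k : A_{p,q} → A_{p,q} is a bounded linear operator. -/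
open Filter Set

/-- `f` belongs to `A_{p,q}`: viewed as a function on `(0,∞)` (values elsewhere
are irrelevant), it is continuous, with `limsup_{t→0⁺} t^p |f(t)| < ∞` and
`limsup_{t→∞} t^q |f(t)| < ∞`. -/
def MemApq (p q : ℝ) (f : ℝ → ℝ) : Prop :=
  ContinuousOn f (Set.Ioi 0) ∧
  (∃ M : ℝ, ∀ᶠ t in nhdsWithin 0 (Set.Ioi 0), t ^ p * |f t| ≤ M) ∧
  (∃ M : ℝ, ∀ᶠ t in atTop, t ^ q * |f t| ≤ M)

/-- `‖f‖_{p,q} = max{ sup_{t∈(0,1)} t^p |f(t)|, sup_{t∈[1,∞)} t^q |f(t)| }`. -/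
noncomputable def normApq (p q : ℝ) (f : ℝ → ℝ) : ℝ :=
  max (sSup ((fun t : ℝ => t ^ p * |f t|) '' Set.Ioo 0 1))
      (sSup ((fun t : ℝ => t ^ q * |f t|) '' Set.Ici 1))


/-- The operator `T_k`: `T_k f (t) = ∑_{j=1}^∞ j^k f(jt)`. -/
noncomputable def Tk (k : ℕ) (f : ℝ → ℝ) : ℝ → ℝ :=
  fun t => ∑' j : ℕ, ((j : ℝ) + 1) ^ k * f (((j : ℝ) + 1) * t)

/-! ### Auxiliary lemmas -/

lemma aux_bdd1 (p q : ℝ) (f : ℝ → ℝ) (hp0 : 0 ≤ p) (hf : MemApq p q f) :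
    ∃ C, ∀ t ∈ Set.Ioo (0:ℝ) 1, t ^ p * |f t| ≤ C := by
  obtain ⟨hc, ⟨M, hM⟩, _⟩ := hf
  rw [Filter.eventually_iff, mem_nhdsGT_iff_exists_Ioo_subset] at hM
  obtain ⟨u, hu, hsub⟩ := hM
  have hu0 : 0 < u := hu
  have hmin : 0 < min u 1 := lt_min hu0 one_pos
  set a := min u 1 / 2 with ha
  have ha0 : 0 < a := by positivity
  have hcont : ContinuousOn (fun t => t ^ p * |f t|) (Set.Icc a 1) := by
    apply ContinuousOn.mul
    · intro x _
      exact (Real.continuousAt_rpow_const x p (Or.inr hp0)).continuousWithinAt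
    · exact (hc.mono (fun x hx => lt_of_lt_of_le ha0 hx.1)).abs
  obtain ⟨C, hC⟩ := isCompact_Icc.exists_bound_of_continuousOn hcont
  refine ⟨max M C, fun t ht => ?_⟩
  by_cases h : t < min u 1
  · exact le_max_of_le_left (hsub ⟨ht.1, h.trans_le (min_le_left _ _)⟩)
  · push_neg at h
    have hmem : t ∈ Set.Icc a 1 := ⟨le_trans (by linarith) h, ht.2.le⟩
    have := hC t hmem
    rw [Real.norm_eq_abs] at this
    exact le_max_of_le_right (le_trans (le_abs_self _) this)

lemma aux_bdd2 (p q : ℝ) (f : ℝ → ℝ) (hq0 : 0 ≤ q) (hf : MemApq p q f) :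
    ∃ C, ∀ t ∈ Set.Ici (1:ℝ), t ^ q * |f t| ≤ C := by
  obtain ⟨hc, _, ⟨M, hM⟩⟩ := hf
  obtain ⟨R, hR⟩ := eventually_atTop.1 hM
  set b := max R 1 with hb
  have hcont : ContinuousOn (fun t => t ^ q * |f t|) (Set.Icc 1 b) := by
    apply ContinuousOn.mul
    · intro x _
      exact (Real.continuousAt_rpow_const x q (Or.inr hq0)).continuousWithinAt
    · exact (hc.mono (fun x hx => lt_of_lt_of_le one_pos hx.1)).abs
  obtain ⟨C, hC⟩ := isCompact_Icc.exists_bound_of_continuousOn hcont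
  refine ⟨max M C, fun t ht => ?_⟩
  by_cases h : b ≤ t
  · exact le_max_of_le_left (hR t (le_trans (le_max_left _ _) h))
  · push_neg at h
    have := hC t ⟨ht, h.le⟩
    rw [Real.norm_eq_abs] at this
    exact le_max_of_le_right (le_trans (le_abs_self _) this)

lemma aux_le_norm1 (p q : ℝ) (f : ℝ → ℝ) (hp0 : 0 ≤ p) (hf : MemApq p q f) :
    ∀ t ∈ Set.Ioo (0:ℝ) 1, t ^ p * |f t| ≤ normApq p q f := by
  obtain ⟨C, hC⟩ := aux_bdd1 p q f hp0 hf
  intro t ht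
  refine le_trans (le_csSup ⟨C, ?_⟩ ?_) (le_max_left _ _)
  · rintro x ⟨s, hs, rfl⟩; exact hC s hs
  · exact ⟨t, ht, rfl⟩

lemma aux_le_norm2 (p q : ℝ) (f : ℝ → ℝ) (hq0 : 0 ≤ q) (hf : MemApq p q f) :
    ∀ t ∈ Set.Ici (1:ℝ), t ^ q * |f t| ≤ normApq p q f := by
  obtain ⟨C, hC⟩ := aux_bdd2 p q f hq0 hf
  intro t ht
  refine le_trans (le_csSup ⟨C, ?_⟩ ?_) (le_max_right _ _)
  · rintro x ⟨s, hs, rfl⟩; exact hC s hs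
  · exact ⟨t, ht, rfl⟩

lemma aux_norm_nonneg (p q : ℝ) (f : ℝ → ℝ) (hq0 : 0 ≤ q) (hf : MemApq p q f) :
    0 ≤ normApq p q f :=
  le_trans (by positivity) (aux_le_norm2 p q f hq0 hf 1 Set.self_mem_Ici)

/-- The comparison series. -/
lemma aux_S_summable (k : ℕ) (r : ℝ) (hr : (k:ℝ) + 1 < r) :
    Summable (fun j : ℕ => ((j:ℝ) + 1) ^ ((k:ℝ) - r)) := by
  have h : Summable (fun n : ℕ => (n:ℝ) ^ ((k:ℝ) - r)) :=
    Real.summable_nat_rpow.2 (by linarith)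
  have h2 := (summable_nat_add_iff 1).2 h
  exact h2.congr (fun n => by push_cast; ring_nf)

section TermBounds

variable {k : ℕ} {p q N : ℝ} {f : ℝ → ℝ}

/-- Generic bound, valid for all `t > 0`. -/
lemma term_bd (hp : (k:ℝ) + 1 < p) (hq : (k:ℝ) + 1 < q) (hN : 0 ≤ N)
    (h1 : ∀ s ∈ Set.Ioo (0:ℝ) 1, s ^ p * |f s| ≤ N)
    (h2 : ∀ s ∈ Set.Ici (1:ℝ), s ^ q * |f s| ≤ N)
    {t : ℝ} (ht : 0 < t) (j : ℕ) :
    ((j:ℝ) + 1) ^ k * |f (((j:ℝ) + 1) * t)| ≤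
      (N * (t ^ (-p) + t ^ (-q))) * ((j:ℝ) + 1) ^ ((k:ℝ) - min p q) := by
  set J : ℝ := (j:ℝ) + 1 with hJdef
  have hJ1 : (1:ℝ) ≤ J := le_add_of_nonneg_left (Nat.cast_nonneg j)
  have hJ0 : (0:ℝ) < J := lt_of_lt_of_le one_pos hJ1
  have hs0 : 0 < J * t := mul_pos hJ0 ht
  have hknat : J ^ k = J ^ (k:ℝ) := (Real.rpow_natCast J k).symm
  have hrp : min p q ≤ p := min_le_left _ _
  have hrq : min p q ≤ q := min_le_right _ _
  have htq0 : 0 ≤ t ^ (-q) := Real.rpow_nonneg ht.le _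
  have htp0 : 0 ≤ t ^ (-p) := Real.rpow_nonneg ht.le _
  have hJr0 : 0 ≤ J ^ ((k:ℝ) - min p q) := Real.rpow_nonneg hJ0.le _
  by_cases hcase : J * t < 1
  · have hfb : |f (J * t)| ≤ N * (J * t) ^ (-p) := by
      have h := h1 (J * t) ⟨hs0, hcase⟩
      have hsp : 0 < (J * t) ^ p := Real.rpow_pos_of_pos hs0 p
      rw [Real.rpow_neg hs0.le, mul_comm N, inv_mul_eq_div, le_div_iff₀ hsp]
      calc |f (J * t)| * (J * t) ^ p = (J * t) ^ p * |f (J * t)| := mul_comm _ _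
        _ ≤ N := h
    have hmulr : (J * t) ^ (-p) = J ^ (-p) * t ^ (-p) := Real.mul_rpow hJ0.le ht.le
    have hJp : J ^ (k:ℝ) * J ^ (-p) = J ^ ((k:ℝ) - p) := by
      rw [← Real.rpow_add hJ0]; ring_nf
    have hexp : J ^ ((k:ℝ) - p) ≤ J ^ ((k:ℝ) - min p q) :=
      Real.rpow_le_rpow_of_exponent_le hJ1 (by linarith)
    calc J ^ k * |f (J * t)| ≤ J ^ (k:ℝ) * (N * (J ^ (-p) * t ^ (-p))) := by
          rw [hknat] at *
          rw [hmulr] at hfb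
          have := mul_le_mul_of_nonneg_left hfb (Real.rpow_nonneg hJ0.le (k:ℝ))
          linarith
      _ = (N * t ^ (-p)) * (J ^ (k:ℝ) * J ^ (-p)) := by ring
      _ = (N * t ^ (-p)) * J ^ ((k:ℝ) - p) := by rw [hJp]
      _ ≤ (N * t ^ (-p)) * J ^ ((k:ℝ) - min p q) :=
          mul_le_mul_of_nonneg_left hexp (by positivity)
      _ ≤ (N * (t ^ (-p) + t ^ (-q))) * J ^ ((k:ℝ) - min p q) := by
          apply mul_le_mul_of_nonneg_right _ hJr0
          nlinarith
  · push_neg at hcase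
    have hfb : |f (J * t)| ≤ N * (J * t) ^ (-q) := by
      have h := h2 (J * t) hcase
      have hsp : 0 < (J * t) ^ q := Real.rpow_pos_of_pos hs0 q
      rw [Real.rpow_neg hs0.le, mul_comm N, inv_mul_eq_div, le_div_iff₀ hsp]
      calc |f (J * t)| * (J * t) ^ q = (J * t) ^ q * |f (J * t)| := mul_comm _ _
        _ ≤ N := h
    have hmulr : (J * t) ^ (-q) = J ^ (-q) * t ^ (-q) := Real.mul_rpow hJ0.le ht.le
    have hJp : J ^ (k:ℝ) * J ^ (-q) = J ^ ((k:ℝ) - q) := by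
      rw [← Real.rpow_add hJ0]; ring_nf
    have hexp : J ^ ((k:ℝ) - q) ≤ J ^ ((k:ℝ) - min p q) :=
      Real.rpow_le_rpow_of_exponent_le hJ1 (by linarith)
    calc J ^ k * |f (J * t)| ≤ J ^ (k:ℝ) * (N * (J ^ (-q) * t ^ (-q))) := by
          rw [hknat] at *
          rw [hmulr] at hfb
          have := mul_le_mul_of_nonneg_left hfb (Real.rpow_nonneg hJ0.le (k:ℝ))
          linarith
      _ = (N * t ^ (-q)) * (J ^ (k:ℝ) * J ^ (-q)) := by ring
      _ = (N * t ^ (-q)) * J ^ ((k:ℝ) - q) := by rw [hJp]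
      _ ≤ (N * t ^ (-q)) * J ^ ((k:ℝ) - min p q) :=
          mul_le_mul_of_nonneg_left hexp (by positivity)
      _ ≤ (N * (t ^ (-p) + t ^ (-q))) * J ^ ((k:ℝ) - min p q) := by
          apply mul_le_mul_of_nonneg_right _ hJr0
          nlinarith

/-- Bound on `(0,1)`. -/
lemma term_bd1 (hp : (k:ℝ) + 1 < p) (hq : (k:ℝ) + 1 < q) (hN : 0 ≤ N)
    (h1 : ∀ s ∈ Set.Ioo (0:ℝ) 1, s ^ p * |f s| ≤ N)
    (h2 : ∀ s ∈ Set.Ici (1:ℝ), s ^ q * |f s| ≤ N)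
    {t : ℝ} (ht : t ∈ Set.Ioo (0:ℝ) 1) (j : ℕ) :
    t ^ p * (((j:ℝ) + 1) ^ k * |f (((j:ℝ) + 1) * t)|) ≤
      N * ((j:ℝ) + 1) ^ ((k:ℝ) - min p q) := by
  obtain ⟨ht0, ht1⟩ := ht
  set J : ℝ := (j:ℝ) + 1 with hJdef
  have hJ1 : (1:ℝ) ≤ J := le_add_of_nonneg_left (Nat.cast_nonneg j)
  have hJ0 : (0:ℝ) < J := lt_of_lt_of_le one_pos hJ1
  have hs0 : 0 < J * t := mul_pos hJ0 ht0
  have hknat : J ^ k = J ^ (k:ℝ) := (Real.rpow_natCast J k).symm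
  have hrp : min p q ≤ p := min_le_left _ _
  have hrq : min p q ≤ q := min_le_right _ _
  have hJr0 : 0 ≤ J ^ ((k:ℝ) - min p q) := Real.rpow_nonneg hJ0.le _
  have htpp0 : 0 ≤ t ^ p := Real.rpow_nonneg ht0.le _
  by_cases hcase : J * t < 1
  · have hfb : |f (J * t)| ≤ N * (J ^ (-p) * t ^ (-p)) := by
      have h := h1 (J * t) ⟨hs0, hcase⟩
      have hsp : 0 < (J * t) ^ p := Real.rpow_pos_of_pos hs0 p
      rw [← Real.mul_rpow hJ0.le ht0.le, Real.rpow_neg hs0.le, mul_comm N,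
        inv_mul_eq_div, le_div_iff₀ hsp]
      calc |f (J * t)| * (J * t) ^ p = (J * t) ^ p * |f (J * t)| := mul_comm _ _
        _ ≤ N := h
    have htp : t ^ p * t ^ (-p) = 1 := by
      rw [← Real.rpow_add ht0]; simp
    have hJp : J ^ (k:ℝ) * J ^ (-p) = J ^ ((k:ℝ) - p) := by
      rw [← Real.rpow_add hJ0]; ring_nf
    have hexp : J ^ ((k:ℝ) - p) ≤ J ^ ((k:ℝ) - min p q) :=
      Real.rpow_le_rpow_of_exponent_le hJ1 (by linarith)
    calc t ^ p * (J ^ k * |f (J * t)|)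
        ≤ t ^ p * (J ^ (k:ℝ) * (N * (J ^ (-p) * t ^ (-p)))) := by
          rw [hknat]
          apply mul_le_mul_of_nonneg_left _ htpp0
          exact mul_le_mul_of_nonneg_left hfb (Real.rpow_nonneg hJ0.le _)
      _ = N * (J ^ (k:ℝ) * J ^ (-p)) * (t ^ p * t ^ (-p)) := by ring
      _ = N * J ^ ((k:ℝ) - p) := by rw [htp, hJp, mul_one]
      _ ≤ N * J ^ ((k:ℝ) - min p q) := mul_le_mul_of_nonneg_left hexp hN
  · push_neg at hcase
    have hfb : |f (J * t)| ≤ N * (J ^ (-(min p q)) * t ^ (-(min p q))) := by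
      have h := h2 (J * t) hcase
      have hsp : 0 < (J * t) ^ q := Real.rpow_pos_of_pos hs0 q
      have step : |f (J * t)| ≤ N * (J * t) ^ (-q) := by
        rw [Real.rpow_neg hs0.le, mul_comm N, inv_mul_eq_div, le_div_iff₀ hsp]
        calc |f (J * t)| * (J * t) ^ q = (J * t) ^ q * |f (J * t)| := mul_comm _ _
          _ ≤ N := h
      refine step.trans ?_
      rw [← Real.mul_rpow hJ0.le ht0.le]
      exact mul_le_mul_of_nonneg_left
        (Real.rpow_le_rpow_of_exponent_le hcase (by linarith)) hN
    have htp : t ^ p * t ^ (-(min p q)) = t ^ (p - min p q) := by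
      rw [← Real.rpow_add ht0]; ring_nf
    have htple : t ^ (p - min p q) ≤ 1 :=
      Real.rpow_le_one ht0.le ht1.le (by linarith)
    have hJp : J ^ (k:ℝ) * J ^ (-(min p q)) = J ^ ((k:ℝ) - min p q) := by
      rw [← Real.rpow_add hJ0]; ring_nf
    calc t ^ p * (J ^ k * |f (J * t)|)
        ≤ t ^ p * (J ^ (k:ℝ) * (N * (J ^ (-(min p q)) * t ^ (-(min p q))))) := by
          rw [hknat]
          apply mul_le_mul_of_nonneg_left _ htpp0
          exact mul_le_mul_of_nonneg_left hfb (Real.rpow_nonneg hJ0.le _)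
      _ = N * (J ^ (k:ℝ) * J ^ (-(min p q))) * (t ^ p * t ^ (-(min p q))) := by ring
      _ = N * J ^ ((k:ℝ) - min p q) * t ^ (p - min p q) := by rw [htp, hJp]
      _ ≤ N * J ^ ((k:ℝ) - min p q) * 1 :=
          mul_le_mul_of_nonneg_left htple (mul_nonneg hN hJr0)
      _ = N * J ^ ((k:ℝ) - min p q) := mul_one _

/-- Bound on `[1,∞)`. -/
lemma term_bd2 (hp : (k:ℝ) + 1 < p) (hq : (k:ℝ) + 1 < q) (hN : 0 ≤ N)
    (h2 : ∀ s ∈ Set.Ici (1:ℝ), s ^ q * |f s| ≤ N)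
    {t : ℝ} (ht : t ∈ Set.Ici (1:ℝ)) (j : ℕ) :
    t ^ q * (((j:ℝ) + 1) ^ k * |f (((j:ℝ) + 1) * t)|) ≤
      N * ((j:ℝ) + 1) ^ ((k:ℝ) - min p q) := by
  have ht1 : (1:ℝ) ≤ t := ht
  have ht0 : (0:ℝ) < t := lt_of_lt_of_le one_pos ht1
  set J : ℝ := (j:ℝ) + 1 with hJdef
  have hJ1 : (1:ℝ) ≤ J := le_add_of_nonneg_left (Nat.cast_nonneg j)
  have hJ0 : (0:ℝ) < J := lt_of_lt_of_le one_pos hJ1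
  have hs0 : 0 < J * t := mul_pos hJ0 ht0
  have hs1 : (1:ℝ) ≤ J * t := le_trans ht1 (le_mul_of_one_le_left ht0.le hJ1)
  have hknat : J ^ k = J ^ (k:ℝ) := (Real.rpow_natCast J k).symm
  have hrq : min p q ≤ q := min_le_right _ _
  have htqq0 : 0 ≤ t ^ q := Real.rpow_nonneg ht0.le _
  have hfb : |f (J * t)| ≤ N * (J ^ (-q) * t ^ (-q)) := by
    have h := h2 (J * t) hs1
    have hsp : 0 < (J * t) ^ q := Real.rpow_pos_of_pos hs0 q
    rw [← Real.mul_rpow hJ0.le ht0.le, Real.rpow_neg hs0.le, mul_comm N,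
      inv_mul_eq_div, le_div_iff₀ hsp]
    calc |f (J * t)| * (J * t) ^ q = (J * t) ^ q * |f (J * t)| := mul_comm _ _
      _ ≤ N := h
  have htp : t ^ q * t ^ (-q) = 1 := by rw [← Real.rpow_add ht0]; simp
  have hJp : J ^ (k:ℝ) * J ^ (-q) = J ^ ((k:ℝ) - q) := by
    rw [← Real.rpow_add hJ0]; ring_nf
  have hexp : J ^ ((k:ℝ) - q) ≤ J ^ ((k:ℝ) - min p q) :=
    Real.rpow_le_rpow_of_exponent_le hJ1 (by linarith)
  calc t ^ q * (J ^ k * |f (J * t)|)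
      ≤ t ^ q * (J ^ (k:ℝ) * (N * (J ^ (-q) * t ^ (-q)))) := by
        rw [hknat]
        apply mul_le_mul_of_nonneg_left _ htqq0
        exact mul_le_mul_of_nonneg_left hfb (Real.rpow_nonneg hJ0.le _)
    _ = N * (J ^ (k:ℝ) * J ^ (-q)) * (t ^ q * t ^ (-q)) := by ring
    _ = N * J ^ ((k:ℝ) - q) := by rw [htp, hJp, mul_one]
    _ ≤ N * J ^ ((k:ℝ) - min p q) := mul_le_mul_of_nonneg_left hexp hN

/-- Summability of the absolute terms. -/
lemma aux_summable_abs (hp : (k:ℝ) + 1 < p) (hq : (k:ℝ) + 1 < q) (hN : 0 ≤ N)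
    (h1 : ∀ s ∈ Set.Ioo (0:ℝ) 1, s ^ p * |f s| ≤ N)
    (h2 : ∀ s ∈ Set.Ici (1:ℝ), s ^ q * |f s| ≤ N)
    {t : ℝ} (ht : 0 < t) :
    Summable (fun j : ℕ => ((j:ℝ) + 1) ^ k * |f (((j:ℝ) + 1) * t)|) := by
  have hS := aux_S_summable k (min p q) (lt_min hp hq)
  exact Summable.of_nonneg_of_le (fun j => by positivity)
    (fun j => term_bd hp hq hN h1 h2 ht j) (hS.mul_left _)

end TermBounds

/-- for `p, q > k+1`, the series defining `T_k f` converges for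
every `t > 0` and every `f ∈ A_{p,q}`, `T_k f ∈ A_{p,q}`, and
`T_k : A_{p,q} → A_{p,q}` is a bounded linear operator. -/
theorem stmt6 (k : ℕ) (p q : ℝ) (hp : (k : ℝ) + 1 < p) (hq : (k : ℝ) + 1 < q) :
    (∀ f : ℝ → ℝ, MemApq p q f → ∀ t : ℝ, 0 < t →
      Summable (fun j : ℕ => ((j : ℝ) + 1) ^ k * f (((j : ℝ) + 1) * t))) ∧
    (∀ f : ℝ → ℝ, MemApq p q f → MemApq p q (Tk k f)) ∧
    (∀ f g : ℝ → ℝ, MemApq p q f → MemApq p q g → ∀ t : ℝ, 0 < t →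
      Tk k (f + g) t = Tk k f t + Tk k g t) ∧
    (∀ (c : ℝ) (f : ℝ → ℝ), MemApq p q f → ∀ t : ℝ, 0 < t →
      Tk k (c • f) t = c * Tk k f t) ∧
    (∃ M : ℝ, 0 ≤ M ∧ ∀ f : ℝ → ℝ, MemApq p q f →
      normApq p q (Tk k f) ≤ M * normApq p q f) := by
  have hk0 : (0:ℝ) ≤ (k:ℝ) := Nat.cast_nonneg k
  have hp0 : 0 ≤ p := by linarith
  have hq0 : 0 ≤ q := by linarith
  have hS : Summable (fun j : ℕ => ((j:ℝ) + 1) ^ ((k:ℝ) - min p q)) :=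
    aux_S_summable k (min p q) (lt_min hp hq)
  set S : ℝ := ∑' j : ℕ, ((j:ℝ) + 1) ^ ((k:ℝ) - min p q) with hSdef
  have hS0 : 0 ≤ S := tsum_nonneg (fun j => Real.rpow_nonneg (by positivity) _)
  -- pieces associated to a function f
  have habs : ∀ f : ℝ → ℝ, MemApq p q f → ∀ t : ℝ, 0 < t →
      Summable (fun j : ℕ => ((j:ℝ) + 1) ^ k * |f (((j:ℝ) + 1) * t)|) := by
    intro f hf t ht
    exact aux_summable_abs hp hq (aux_norm_nonneg p q f hq0 hf)
      (aux_le_norm1 p q f hp0 hf) (aux_le_norm2 p q f hq0 hf) ht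
  have hsum : ∀ f : ℝ → ℝ, MemApq p q f → ∀ t : ℝ, 0 < t →
      Summable (fun j : ℕ => ((j:ℝ) + 1) ^ k * f (((j:ℝ) + 1) * t)) := by
    intro f hf t ht
    apply Summable.of_abs
    exact (habs f hf t ht).congr (fun j => by
      rw [abs_mul, abs_of_nonneg (by positivity : (0:ℝ) ≤ ((j:ℝ)+1)^k)])
  -- the key pointwise bounds for Tk f
  have hTkabs : ∀ f : ℝ → ℝ, MemApq p q f → ∀ t : ℝ, 0 < t →
      |Tk k f t| ≤ ∑' j : ℕ, ((j:ℝ) + 1) ^ k * |f (((j:ℝ) + 1) * t)| := by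
    intro f hf t ht
    have hnorm : ∀ j : ℕ, ‖((j:ℝ) + 1) ^ k * f (((j:ℝ) + 1) * t)‖ =
        ((j:ℝ) + 1) ^ k * |f (((j:ℝ) + 1) * t)| := fun j => by
      rw [Real.norm_eq_abs, abs_mul,
        abs_of_nonneg (by positivity : (0:ℝ) ≤ ((j:ℝ)+1)^k)]
    have hsn : Summable (fun j : ℕ => ‖((j:ℝ) + 1) ^ k * f (((j:ℝ) + 1) * t)‖) :=
      (habs f hf t ht).congr (fun j => (hnorm j).symm)
    have h2 := norm_tsum_le_tsum_norm hsn
    rw [Real.norm_eq_abs] at h2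
    calc |Tk k f t| = |∑' j : ℕ, ((j:ℝ) + 1) ^ k * f (((j:ℝ) + 1) * t)| := rfl
      _ ≤ ∑' j : ℕ, ‖((j:ℝ) + 1) ^ k * f (((j:ℝ) + 1) * t)‖ := h2
      _ = ∑' j : ℕ, ((j:ℝ) + 1) ^ k * |f (((j:ℝ) + 1) * t)| := tsum_congr hnorm
  have hbd1 : ∀ f : ℝ → ℝ, MemApq p q f → ∀ t ∈ Set.Ioo (0:ℝ) 1,
      t ^ p * |Tk k f t| ≤ normApq p q f * S := by
    intro f hf t ht
    have hN := aux_norm_nonneg p q f hq0 hf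
    have h1 := aux_le_norm1 p q f hp0 hf
    have h2 := aux_le_norm2 p q f hq0 hf
    calc t ^ p * |Tk k f t|
        ≤ t ^ p * ∑' j : ℕ, ((j:ℝ) + 1) ^ k * |f (((j:ℝ) + 1) * t)| :=
          mul_le_mul_of_nonneg_left (hTkabs f hf t ht.1) (Real.rpow_nonneg ht.1.le p)
      _ = ∑' j : ℕ, t ^ p * (((j:ℝ) + 1) ^ k * |f (((j:ℝ) + 1) * t)|) :=
          tsum_mul_left.symm
      _ ≤ ∑' j : ℕ, normApq p q f * ((j:ℝ) + 1) ^ ((k:ℝ) - min p q) :=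
          Summable.tsum_le_tsum (fun j => term_bd1 hp hq hN h1 h2 ht j)
            ((habs f hf t ht.1).mul_left _) (hS.mul_left _)
      _ = normApq p q f * S := tsum_mul_left
  have hbd2 : ∀ f : ℝ → ℝ, MemApq p q f → ∀ t ∈ Set.Ici (1:ℝ),
      t ^ q * |Tk k f t| ≤ normApq p q f * S := by
    intro f hf t ht
    have hN := aux_norm_nonneg p q f hq0 hf
    have h2 := aux_le_norm2 p q f hq0 hf
    have ht0 : (0:ℝ) < t := lt_of_lt_of_le one_pos ht
    calc t ^ q * |Tk k f t|
        ≤ t ^ q * ∑' j : ℕ, ((j:ℝ) + 1) ^ k * |f (((j:ℝ) + 1) * t)| :=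
          mul_le_mul_of_nonneg_left (hTkabs f hf t ht0) (Real.rpow_nonneg ht0.le q)
      _ = ∑' j : ℕ, t ^ q * (((j:ℝ) + 1) ^ k * |f (((j:ℝ) + 1) * t)|) :=
          tsum_mul_left.symm
      _ ≤ ∑' j : ℕ, normApq p q f * ((j:ℝ) + 1) ^ ((k:ℝ) - min p q) :=
          Summable.tsum_le_tsum (fun j => term_bd2 hp hq hN h2 ht j)
            ((habs f hf t ht0).mul_left _) (hS.mul_left _)
      _ = normApq p q f * S := tsum_mul_left
  -- continuity of Tk f
  have hcont : ∀ f : ℝ → ℝ, MemApq p q f → ContinuousOn (Tk k f) (Set.Ioi 0) := by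
    intro f hf x hx
    have hN := aux_norm_nonneg p q f hq0 hf
    have h1 := aux_le_norm1 p q f hp0 hf
    have h2 := aux_le_norm2 p q f hq0 hf
    set N := normApq p q f
    have hx2 : (0:ℝ) < x / 2 := half_pos hx
    have hco : ContinuousOn (Tk k f) (Set.Ioi (x/2)) := by
      have : ContinuousOn
          (fun t : ℝ => ∑' j : ℕ, ((j:ℝ) + 1) ^ k * f (((j:ℝ) + 1) * t))
          (Set.Ioi (x/2)) := by
        apply continuousOn_tsum
          (u := fun j : ℕ => (N * ((x/2) ^ (-p) + (x/2) ^ (-q))) *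
            ((j:ℝ) + 1) ^ ((k:ℝ) - min p q))
        · intro j
          apply ContinuousOn.mul continuousOn_const
          apply ContinuousOn.comp hf.1 (continuous_mul_left ((j:ℝ)+1)).continuousOn
          intro t ht
          have : (0:ℝ) < ((j:ℝ)+1) * t :=
            mul_pos (by positivity) (hx2.trans ht)
          exact this
        · exact hS.mul_left _
        · intro j t ht
          have ht0 : (0:ℝ) < t := hx2.trans ht
          rw [Real.norm_eq_abs, abs_mul,
            abs_of_nonneg (by positivity : (0:ℝ) ≤ ((j:ℝ)+1)^k)]
          refine (term_bd hp hq hN h1 h2 ht0 j).trans ?_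
          apply mul_le_mul_of_nonneg_right _ (Real.rpow_nonneg (by positivity) _)
          apply mul_le_mul_of_nonneg_left _ hN
          have e1 : t ^ (-p) ≤ (x/2) ^ (-p) :=
            Real.rpow_le_rpow_of_nonpos hx2 (le_of_lt ht) (by linarith)
          have e2 : t ^ (-q) ≤ (x/2) ^ (-q) :=
            Real.rpow_le_rpow_of_nonpos hx2 (le_of_lt ht) (by linarith)
          linarith
      exact this
    exact (hco.continuousAt (Ioi_mem_nhds (half_lt_self hx))).continuousWithinAt
  refine ⟨hsum, ?_, ?_, ?_, ?_⟩
  · -- Tk f ∈ A_{p,q}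
    intro f hf
    refine ⟨hcont f hf, ⟨normApq p q f * S, ?_⟩, ⟨normApq p q f * S, ?_⟩⟩
    · have hmem : Set.Ioo (0:ℝ) 1 ∈ nhdsWithin 0 (Set.Ioi 0) :=
        Ioo_mem_nhdsGT_of_mem ⟨le_refl (0:ℝ), one_pos⟩
      filter_upwards [hmem] with t ht
      exact hbd1 f hf t ht
    · rw [eventually_atTop]
      exact ⟨1, fun t ht => hbd2 f hf t ht⟩
  · -- additivity
    intro f g hf hg t ht
    have h : (fun j : ℕ => ((j:ℝ) + 1) ^ k * (f + g) (((j:ℝ) + 1) * t)) =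
        (fun j : ℕ => ((j:ℝ) + 1) ^ k * f (((j:ℝ) + 1) * t) +
          ((j:ℝ) + 1) ^ k * g (((j:ℝ) + 1) * t)) := by
      funext j; simp [Pi.add_apply, mul_add]
    show (∑' j : ℕ, ((j:ℝ) + 1) ^ k * (f + g) (((j:ℝ) + 1) * t)) = _
    rw [h]
    exact Summable.tsum_add (hsum f hf t ht) (hsum g hg t ht)
  · -- homogeneity
    intro c f hf t ht
    show (∑' j : ℕ, ((j:ℝ) + 1) ^ k * (c • f) (((j:ℝ) + 1) * t)) =
      c * ∑' j : ℕ, ((j:ℝ) + 1) ^ k * f (((j:ℝ) + 1) * t)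
    rw [← tsum_mul_left]
    exact tsum_congr (fun j => by simp [Pi.smul_apply, smul_eq_mul]; ring)
  · -- boundedness
    refine ⟨S, hS0, fun f hf => ?_⟩
    have hne1 : ((fun t : ℝ => t ^ p * |Tk k f t|) '' Set.Ioo 0 1).Nonempty :=
      ⟨_, ⟨(1/2 : ℝ), ⟨by norm_num, by norm_num⟩, rfl⟩⟩
    have hne2 : ((fun t : ℝ => t ^ q * |Tk k f t|) '' Set.Ici 1).Nonempty :=
      ⟨_, ⟨(1 : ℝ), Set.self_mem_Ici, rfl⟩⟩
    have hb1 : sSup ((fun t : ℝ => t ^ p * |Tk k f t|) '' Set.Ioo 0 1) ≤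
        S * normApq p q f := by
      apply csSup_le hne1
      rintro x ⟨t, ht, rfl⟩
      rw [mul_comm S]
      exact hbd1 f hf t ht
    have hb2 : sSup ((fun t : ℝ => t ^ q * |Tk k f t|) '' Set.Ici 1) ≤
        S * normApq p q f := by
      apply csSup_le hne2
      rintro x ⟨t, ht, rfl⟩
      rw [mul_comm S]
      exact hbd2 f hf t ht
    exact max_le hb1 hb2
end

section
/- Let k ∈ ℕ and p ≥ q > k + 1. Then the operator norm of T_k − I on A_{p,q} satisfies ‖T_k − I‖ ≤ ζ(q − k) − 1, where I is the identity operator and ζ is the Riemann zeta function. -/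
open Filter Set

/-- Riemann zeta function for real `s > 1`: `ζ(s) = ∑_{j=1}^∞ j^{−s}`. -/
noncomputable def zetaR (s : ℝ) : ℝ := ∑' j : ℕ, ((j : ℝ) + 1) ^ (-s)

lemma contAux {f : ℝ → ℝ} (hf : ContinuousOn f (Set.Ioi 0)) (r : ℝ) :
    ContinuousOn (fun t : ℝ => t ^ r * |f t|) (Set.Ioi 0) := by
  apply ContinuousOn.mul _ hf.abs
  intro t ht
  exact (Real.continuousAt_rpow_const t r (Or.inl (ne_of_gt ht))).continuousWithinAt

lemma rpowCalc (K m t d r c : ℝ) (hm : 0 < m) (ht : 0 < t) :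
    t ^ c * (m ^ d * (K * (m * t) ^ (-r))) = K * m ^ (d - r) * t ^ (c - r) := by
  rw [Real.mul_rpow hm.le ht.le, show d - r = d + (-r) by ring,
    show c - r = c + (-r) by ring, Real.rpow_add hm, Real.rpow_add ht]
  ring

/-- for `p ≥ q > k+1`, the operator norm of `T_k − I` on
`A_{p,q}` is at most `ζ(q−k) − 1`, i.e.
`‖T_k f − f‖_{p,q} ≤ (ζ(q−k) − 1) ‖f‖_{p,q}` for all `f ∈ A_{p,q}`. -/
theorem stmt7 (k : ℕ) (p q : ℝ) (hq : (k : ℝ) + 1 < q) (hpq : q ≤ p) :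
    ∀ f : ℝ → ℝ, MemApq p q f →
      normApq p q (Tk k f - f) ≤ (zetaR (q - (k : ℝ)) - 1) * normApq p q f := by
  intro f hf
  obtain ⟨hc, ⟨M0, hM0⟩, ⟨M1, hM1⟩⟩ := hf
  -- Boundedness of the two image sets
  have hbdd1 : BddAbove ((fun t : ℝ => t ^ p * |f t|) '' Set.Ioo 0 1) := by
    obtain ⟨u, hu, hsub⟩ := mem_nhdsGT_iff_exists_Ioo_subset.mp hM0
    set δ : ℝ := min u 1 with hδdef
    have hδ : 0 < δ := lt_min hu one_pos
    have hcpt : IsCompact (Set.Icc (δ/2) 1) := isCompact_Icc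
    have hssub : Set.Icc (δ/2) 1 ⊆ Set.Ioi (0:ℝ) := fun x hx => lt_of_lt_of_le (by linarith) hx.1
    obtain ⟨B, hB⟩ := hcpt.bddAbove_image ((contAux hc p).mono hssub)
    refine ⟨max M0 B, ?_⟩
    rintro x ⟨t, ht, rfl⟩
    by_cases h : t < δ
    · exact le_trans (hsub ⟨ht.1, lt_of_lt_of_le h (min_le_left _ _)⟩) (le_max_left _ _)
    · push_neg at h
      exact le_trans (hB (Set.mem_image_of_mem _ ⟨by linarith, ht.2.le⟩)) (le_max_right _ _)
  have hbdd2 : BddAbove ((fun t : ℝ => t ^ q * |f t|) '' Set.Ici 1) := by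
    obtain ⟨R, hR⟩ := eventually_atTop.mp hM1
    have hcpt : IsCompact (Set.Icc (1:ℝ) (max R 1)) := isCompact_Icc
    have hssub : Set.Icc (1:ℝ) (max R 1) ⊆ Set.Ioi (0:ℝ) := fun x hx => lt_of_lt_of_le one_pos hx.1
    obtain ⟨B, hB⟩ := hcpt.bddAbove_image ((contAux hc q).mono hssub)
    refine ⟨max M1 B, ?_⟩
    rintro x ⟨t, ht, rfl⟩
    by_cases h : t ≤ max R 1
    · exact le_trans (hB (Set.mem_image_of_mem _ ⟨ht, h⟩)) (le_max_right _ _)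
    · push_neg at h
      exact le_trans (hR t (le_of_lt (lt_of_le_of_lt (le_max_left _ _) h))) (le_max_left _ _)
  set K : ℝ := normApq p q f with hKdef
  have hMb : ∀ t ∈ Set.Ioo (0:ℝ) 1, t ^ p * |f t| ≤ K :=
    fun t ht => le_trans (le_csSup hbdd1 ⟨t, ht, rfl⟩) (le_max_left _ _)
  have hNb : ∀ t ∈ Set.Ici (1:ℝ), t ^ q * |f t| ≤ K :=
    fun t ht => le_trans (le_csSup hbdd2 ⟨t, ht, rfl⟩) (le_max_right _ _)
  have hK0 : 0 ≤ K := by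
    have := hNb 1 Set.self_mem_Ici
    have h1 : (0:ℝ) ≤ (1:ℝ) ^ q * |f 1| := mul_nonneg (Real.rpow_nonneg zero_le_one q) (abs_nonneg _)
    linarith
  -- pointwise bounds
  have hf1 : ∀ s ∈ Set.Ioo (0:ℝ) 1, |f s| ≤ K * s ^ (-p) := by
    intro s hs
    rw [Real.rpow_neg hs.1.le, ← div_eq_mul_inv, le_div_iff₀ (Real.rpow_pos_of_pos hs.1 p)]
    have := hMb s hs; linarith [mul_comm (|f s|) (s ^ p)]
  have hf2 : ∀ s ∈ Set.Ici (1:ℝ), |f s| ≤ K * s ^ (-q) := by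
    intro s hs
    have hs0 : (0:ℝ) < s := lt_of_lt_of_le one_pos hs
    rw [Real.rpow_neg hs0.le, ← div_eq_mul_inv, le_div_iff₀ (Real.rpow_pos_of_pos hs0 q)]
    have := hNb s hs; linarith [mul_comm (|f s|) (s ^ q)]
  -- key term bound
  have hterm : ∀ t : ℝ, 0 < t → ∀ j : ℕ,
      (if t < 1 then t ^ p else t ^ q) * (((j:ℝ) + 2) ^ (k:ℕ) * |f (((j:ℝ) + 2) * t)|)
        ≤ K * ((j:ℝ) + 2) ^ (-(q - (k:ℝ))) := by
    intro t ht j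
    set m : ℝ := (j:ℝ) + 2 with hmdef
    have hm1 : (1:ℝ) ≤ m := by have := Nat.cast_nonneg (α := ℝ) j; simp only [hmdef]; linarith
    have hm0 : (0:ℝ) < m := by positivity
    have hs0 : 0 < m * t := mul_pos hm0 ht
    have hexp : -(q - (k:ℝ)) = (k:ℝ) - q := by ring
    rw [← Real.rpow_natCast m k, hexp]
    split_ifs with ht1
    · by_cases hs1 : m * t < 1
      · calc t ^ p * (m ^ (k:ℝ) * |f (m * t)|)
            ≤ t ^ p * (m ^ (k:ℝ) * (K * (m * t) ^ (-p))) := by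
              apply mul_le_mul_of_nonneg_left _ (Real.rpow_nonneg ht.le p)
              exact mul_le_mul_of_nonneg_left (hf1 (m*t) ⟨hs0, hs1⟩) (Real.rpow_nonneg hm0.le _)
          _ = K * m ^ ((k:ℝ) - p) * t ^ (p - p) := rpowCalc K m t (k:ℝ) p p hm0 ht
          _ = K * m ^ ((k:ℝ) - p) := by rw [sub_self, Real.rpow_zero, mul_one]
          _ ≤ K * m ^ ((k:ℝ) - q) :=
              mul_le_mul_of_nonneg_left
                (Real.rpow_le_rpow_of_exponent_le hm1 (by linarith)) hK0
      · push_neg at hs1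
        calc t ^ p * (m ^ (k:ℝ) * |f (m * t)|)
            ≤ t ^ p * (m ^ (k:ℝ) * (K * (m * t) ^ (-q))) := by
              apply mul_le_mul_of_nonneg_left _ (Real.rpow_nonneg ht.le p)
              exact mul_le_mul_of_nonneg_left (hf2 (m*t) hs1) (Real.rpow_nonneg hm0.le _)
          _ = K * m ^ ((k:ℝ) - q) * t ^ (p - q) := rpowCalc K m t (k:ℝ) q p hm0 ht
          _ ≤ K * m ^ ((k:ℝ) - q) * 1 := by
              apply mul_le_mul_of_nonneg_left (Real.rpow_le_one ht.le ht1.le (by linarith))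
              exact mul_nonneg hK0 (Real.rpow_nonneg hm0.le _)
          _ = K * m ^ ((k:ℝ) - q) := mul_one _
    · push_neg at ht1
      have hs1 : (1:ℝ) ≤ m * t := by nlinarith
      calc t ^ q * (m ^ (k:ℝ) * |f (m * t)|)
          ≤ t ^ q * (m ^ (k:ℝ) * (K * (m * t) ^ (-q))) := by
            apply mul_le_mul_of_nonneg_left _ (Real.rpow_nonneg ht.le q)
            exact mul_le_mul_of_nonneg_left (hf2 (m*t) hs1) (Real.rpow_nonneg hm0.le _)
        _ = K * m ^ ((k:ℝ) - q) * t ^ (q - q) := rpowCalc K m t (k:ℝ) q q hm0 ht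
        _ = K * m ^ ((k:ℝ) - q) := by rw [sub_self, Real.rpow_zero, mul_one]
  -- summability of the comparison series
  have hqk : (1:ℝ) < q - (k:ℝ) := by linarith
  have hbase : Summable (fun n : ℕ => ((n:ℝ)) ^ (-(q - (k:ℝ)))) :=
    Real.summable_nat_rpow.mpr (by linarith)
  have h1 : Summable (fun n : ℕ => ((n:ℝ) + 1) ^ (-(q - (k:ℝ)))) := by
    have := (summable_nat_add_iff 1).mpr hbase
    exact this.congr fun n => by push_cast; ring_nf
  have h2 : Summable (fun n : ℕ => ((n:ℝ) + 2) ^ (-(q - (k:ℝ)))) := by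
    have := (summable_nat_add_iff 2).mpr hbase
    exact this.congr fun n => by push_cast; ring_nf
  have hzeta : zetaR (q - (k:ℝ)) - 1 = ∑' n : ℕ, ((n:ℝ) + 2) ^ (-(q - (k:ℝ))) := by
    have h := Summable.tsum_eq_zero_add h1
    have h0 : ((0:ℕ):ℝ) + 1 = 1 := by norm_num
    unfold zetaR
    rw [h, h0, Real.one_rpow]
    have : ∀ n : ℕ, (((n+1:ℕ)):ℝ) + 1 = (n:ℝ) + 2 := fun n => by push_cast; ring
    rw [tsum_congr (fun n => by rw [this n])]
    ring
  have hS2nn : (0:ℝ) ≤ ∑' n : ℕ, ((n:ℝ) + 2) ^ (-(q - (k:ℝ))) :=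
    tsum_nonneg fun n => Real.rpow_nonneg (by positivity) _
  -- the main estimate, for each t > 0
  have hmain : ∀ t : ℝ, 0 < t →
      (if t < 1 then t ^ p else t ^ q) * |Tk k f t - f t|
        ≤ (zetaR (q - (k:ℝ)) - 1) * K := by
    intro t ht
    set w : ℝ := if t < 1 then t ^ p else t ^ q with hwdef
    have hw : 0 < w := by
      rw [hwdef]; split_ifs <;> exact Real.rpow_pos_of_pos ht _
    set a : ℕ → ℝ := fun n => ((n:ℝ) + 1) ^ k * f (((n:ℝ) + 1) * t) with hadef
    have hacast : ∀ n : ℕ, a (n+1) = ((n:ℝ) + 2) ^ (k:ℕ) * f (((n:ℝ) + 2) * t) := by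
      intro n
      have : (((n+1:ℕ)):ℝ) + 1 = (n:ℝ) + 2 := by push_cast; ring
      simp only [hadef, this]
    have habs : ∀ n : ℕ, w * |a (n+1)| ≤ K * ((n:ℝ) + 2) ^ (-(q - (k:ℝ))) := by
      intro n
      have h := hterm t ht n
      rw [hacast n, abs_mul, abs_of_nonneg (by positivity : (0:ℝ) ≤ ((n:ℝ)+2)^(k:ℕ))]
      exact h
    have htail : Summable (fun n : ℕ => a (n+1)) := by
      apply Summable.of_norm
      simp only [Real.norm_eq_abs]
      apply Summable.of_nonneg_of_le (fun n => abs_nonneg _) (fun n => ?_)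
        ((h2.mul_left K).div_const w)
      rw [le_div_iff₀ hw]
      have := habs n
      linarith [mul_comm (|a (n+1)|) w]
    have hsa : Summable a := (summable_nat_add_iff 1).mp htail
    have hdiff : Tk k f t - f t = ∑' n, a (n+1) := by
      have h0' : Tk k f t = a 0 + ∑' n, a (n+1) := Summable.tsum_eq_zero_add hsa
      have ha0 : a 0 = f t := by simp [hadef]
      rw [h0', ha0]; ring
    have habs_sum : Summable (fun n => |a (n+1)|) := htail.abs
    calc w * |Tk k f t - f t| = w * |∑' n, a (n+1)| := by rw [hdiff]
      _ ≤ w * ∑' n, |a (n+1)| := by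
          apply mul_le_mul_of_nonneg_left _ hw.le
          simpa [Real.norm_eq_abs] using norm_tsum_le_tsum_norm
            (by simpa [Real.norm_eq_abs] using habs_sum : Summable fun n => ‖a (n+1)‖)
      _ = ∑' n : ℕ, w * |a (n+1)| := tsum_mul_left.symm
      _ ≤ ∑' n : ℕ, K * ((n:ℝ) + 2) ^ (-(q - (k:ℝ))) :=
          Summable.tsum_le_tsum habs (habs_sum.mul_left w) (h2.mul_left K)
      _ = K * ∑' n : ℕ, ((n:ℝ) + 2) ^ (-(q - (k:ℝ))) := tsum_mul_left
      _ = (zetaR (q - (k:ℝ)) - 1) * K := by rw [hzeta]; ring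
  -- conclude
  have hRHS0 : 0 ≤ (zetaR (q - (k:ℝ)) - 1) * K := by
    rw [hzeta]; exact mul_nonneg hS2nn hK0
  rw [show normApq p q (Tk k f - f) =
      max (sSup ((fun t : ℝ => t ^ p * |(Tk k f - f) t|) '' Set.Ioo 0 1))
          (sSup ((fun t : ℝ => t ^ q * |(Tk k f - f) t|) '' Set.Ici 1)) from rfl]
  apply max_le
  · apply Real.sSup_le _ hRHS0
    rintro x ⟨t, ht, rfl⟩
    have := hmain t ht.1
    rw [if_pos ht.2] at this
    simpa using this
  · apply Real.sSup_le _ hRHS0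
    rintro x ⟨t, ht, rfl⟩
    have ht0 : (0:ℝ) < t := lt_of_lt_of_le one_pos ht
    have := hmain t ht0
    rw [if_neg (not_lt.mpr ht)] at this
    simpa using this
end

section
/- Let k ∈ ℕ and for each 0 ≤ i ≤ k let p_i, q_i > i + 1; set p := (p_0,…,p_k), q := (q_0,…,q_k). Then T_0 : A_{p,q;k} → A_{p,q;k} is a bounded linear operator. If moreover p_i ≥ q_i > ζ^{−1}(2) + i for all 0 ≤ i ≤ k, where ζ^{−1} is the inverse of the decreasing bijection ζ : (1,∞) → (1,∞), then T_0 : A_{p,q;k} → A_{p,q;k} is an isomorphism of Banach spaces (a bounded linear bijection with bounded inverse). -/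
open Filter Set

/-- `f ∈ A_{p,q;k}`: `f` is `C^k` on `(0,∞)` and each derivative
`f^{(i)}` belongs to `A_{p_i,q_i}`. -/
def MemApqK (k : ℕ) (p q : Fin (k + 1) → ℝ) (f : ℝ → ℝ) : Prop :=
  ContDiffOn ℝ k f (Set.Ioi 0) ∧
  ∀ i : Fin (k + 1), MemApq (p i) (q i) (iteratedDerivWithin i f (Set.Ioi 0))

/-- `‖f‖_{p,q;k} = ∑_{i=0}^k ‖f^{(i)}‖_{p_i,q_i}`. -/
noncomputable def normApqK (k : ℕ) (p q : Fin (k + 1) → ℝ) (f : ℝ → ℝ) : ℝ :=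
  ∑ i : Fin (k + 1), normApq (p i) (q i) (iteratedDerivWithin i f (Set.Ioi 0))

/-!
`T_0` and its inverse are both dilation series `f ↦ ∑ₙ aₙ f((n+1)t)` with bounded coefficients:
`aₙ = 1` for `T_0` and `aₙ = μ(n+1)` (Möbius) for the inverse. With `ω(t) = t^p` for `t < 1` and
`ω(t) = t^q` for `t ≥ 1` one has `ω(t) |f(ut)| ≤ ‖f‖_{p,q} u^{-min(p,q)}` for `u ≥ 1`, and the
`i`-th derivative of a dilation series is the dilation series of `f⁽ⁱ⁾` with coefficients
`aₙ (n+1)^i`; so any such series maps `A_{p,q;k}` to itself with norm at most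
`sup |aₙ| · ∑ᵢ ζ(min(p_i, q_i) - i)` once `p_i, q_i > i + 1`. Möbius inversion
`∑_{d ∣ m} μ(d) = [m = 1]`, applied to the absolutely convergent double series `∑_{m,n} μ(m) f(mnt)`
summed in either order, shows that the Möbius series is a two-sided inverse of `T_0`.
-/

section Moebius

open ArithmeticFunction

theorem sum_divisorsAntidiagonal_moebius (d : ℕ) :
    ∑ x ∈ d.divisorsAntidiagonal, (moebius x.1 : ℝ) = if d = 1 then 1 else 0 := by
  have h := coe_mul_zeta_apply (f := (moebius : ArithmeticFunction ℝ)) (x := d)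
  rw [coe_moebius_mul_coe_zeta, one_apply] at h
  rw [Nat.sum_divisorsAntidiagonal (fun i _ => (moebius i : ℝ)), h]
  simp [intCoe_apply]

theorem hasSum_moebius_mul_apply_mul {v : ℕ → ℝ} {C e : ℝ} (he : e < -1) (hv0 : v 0 = 0)
    (hv : ∀ d : ℕ, |v d| ≤ C * (d : ℝ) ^ e) :
    HasSum (fun x : ℕ × ℕ => (moebius x.1 : ℝ) * v (x.1 * x.2)) (v 1) := by
  set F := fun x : ℕ × ℕ => (moebius x.1 : ℝ) * v (x.1 * x.2)
  have hsum : Summable F := by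
    have hC : 0 ≤ C := by simpa using (abs_nonneg _).trans (hv 1)
    have hpow := Real.summable_nat_rpow.2 he
    refine Summable.of_norm_bounded
      ((hpow.mul_left C).mul_of_nonneg hpow (fun _ => by positivity) (fun _ => by positivity))
      fun x => ?_
    calc ‖F x‖ = |(moebius x.1 : ℝ)| * |v (x.1 * x.2)| := by rw [Real.norm_eq_abs, abs_mul]
      _ ≤ 1 * (C * ((x.1 * x.2 : ℕ) : ℝ) ^ e) := by
        refine mul_le_mul ?_ (hv _) (abs_nonneg _) zero_le_one
        exact_mod_cast abs_moebius_le_one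
      _ = C * (x.1 : ℝ) ^ e * (x.2 : ℝ) ^ e := by
        rw [Nat.cast_mul, Real.mul_rpow (by positivity) (by positivity)]; ring
  -- grouped by `d = a * b`, the terms add up to `v d * ∑_{a ∣ d} μ a`
  have hfiber : ∀ d : ℕ, ∑' x : (fun x : ℕ × ℕ => x.1 * x.2) ⁻¹' {d}, F x =
      if d = 1 then v 1 else 0 := by
    intro d
    rcases eq_or_ne d 0 with rfl | hd
    · have hzero : ∀ x : (fun x : ℕ × ℕ => x.1 * x.2) ⁻¹' {0}, F x = 0 := fun x => by
        simp [F, show x.1.1 * x.1.2 = 0 from x.2, hv0]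
      simp [hzero]
    rw [show (fun x : ℕ × ℕ => x.1 * x.2) ⁻¹' {d} = d.divisorsAntidiagonal by ext; simp [hd],
      Finset.tsum_subtype' d.divisorsAntidiagonal F]
    calc ∑ x ∈ d.divisorsAntidiagonal, F x
        = (∑ x ∈ d.divisorsAntidiagonal, (moebius x.1 : ℝ)) * v d := by
          rw [Finset.sum_mul]
          exact Finset.sum_congr rfl fun x hx => by rw [← (Nat.mem_divisorsAntidiagonal.1 hx).1]
      _ = if d = 1 then v 1 else 0 := by
          rw [sum_divisorsAntidiagonal_moebius]; split_ifs with h <;> simp [h]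
  have h := hsum.hasSum.tsum_fiberwise (fun x : ℕ × ℕ => x.1 * x.2)
  simp only [hfiber] at h
  rw [(hasSum_ite_eq 1 (v 1)).unique h]
  exact hsum.hasSum

theorem hasSum_moebius_succ_mul {w : ℕ → ℝ} {C e : ℝ} (he : e < -1)
    (hw : ∀ d : ℕ, 0 < d → |w d| ≤ C * (d : ℝ) ^ e) :
    HasSum (fun x : ℕ × ℕ => (moebius (x.1 + 1) : ℝ) * w ((x.1 + 1) * (x.2 + 1))) (w 1) := by
  set v : ℕ → ℝ := fun d => if d = 0 then 0 else w d
  have hv : ∀ d : ℕ, |v d| ≤ C * (d : ℝ) ^ e := fun d => by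
    rcases Nat.eq_zero_or_pos d with rfl | hd
    · simp [v, Real.zero_rpow (by linarith : e ≠ 0)]
    · simpa [v, hd.ne'] using hw d hd
  have hsum := hasSum_moebius_mul_apply_mul he (by simp [v]) hv
  have hsucc : Function.Injective fun x : ℕ × ℕ => (x.1 + 1, x.2 + 1) :=
    fun x y h => by simpa [Prod.ext_iff] using h
  rw [← hsucc.hasSum_iff] at hsum
  · simpa [v, Function.comp_def] using hsum
  rintro ⟨_ | a, _ | b⟩ hab
  · simp
  · simp
  · simp [v]
  · exact absurd ⟨(a, b), rfl⟩ hab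

end Moebius

/-- `normApq p q f` is the supremum of `apqWeight p q t * |f t|` over `t > 0`. -/
noncomputable def apqWeight (p q t : ℝ) : ℝ := if t < 1 then t ^ p else t ^ q

section Weight

variable {p q s t u : ℝ}

theorem apqWeight_pos (ht : 0 < t) : 0 < apqWeight p q t := by
  unfold apqWeight; split_ifs <;> positivity

theorem apqWeight_le_apqWeight (hp : 0 ≤ p) (hq : 0 ≤ q) (hs : 0 < s) (hst : s ≤ t) :
    apqWeight p q s ≤ apqWeight p q t := by
  unfold apqWeight
  split_ifs with hs1 ht1 ht1
  · exact Real.rpow_le_rpow hs.le hst hp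
  · exact (Real.rpow_le_one hs.le hs1.le hp).trans (Real.one_le_rpow (not_lt.1 ht1) hq)
  · linarith
  · exact Real.rpow_le_rpow (by linarith) hst hq

theorem rpow_min_mul_apqWeight_le (hu : 1 ≤ u) (ht : 0 < t) :
    u ^ min p q * apqWeight p q t ≤ apqWeight p q (u * t) := by
  have hu0 : 0 < u := by linarith
  unfold apqWeight
  split_ifs with ht1 hut1 hut1
  · rw [Real.mul_rpow hu0.le ht.le]
    gcongr
    exact min_le_left _ _
  · rcases le_total p q with hpq | hqp
    · rw [min_eq_left hpq, ← Real.mul_rpow hu0.le ht.le]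
      exact Real.rpow_le_rpow_of_exponent_le (not_lt.1 hut1) hpq
    · rw [min_eq_right hqp, Real.mul_rpow hu0.le ht.le]
      exact mul_le_mul_of_nonneg_left (Real.rpow_le_rpow_of_exponent_ge ht ht1.le hqp)
        (by positivity)
  · nlinarith
  · rw [Real.mul_rpow hu0.le ht.le]
    gcongr
    exact min_le_right _ _

end Weight

section Apq

variable {p q B : ℝ} {f g : ℝ → ℝ}

theorem continuousOn_rpow_mul_abs (r : ℝ) (hf : ContinuousOn f (Ioi 0)) :
    ContinuousOn (fun t => t ^ r * |f t|) (Ioi 0) :=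
  (continuousOn_id.rpow_const fun _ ht => Or.inl (ne_of_gt ht)).mul hf.abs

theorem MemApq.bddAbove_Ioo (hf : MemApq p q f) :
    BddAbove ((fun t => t ^ p * |f t|) '' Ioo 0 1) := by
  obtain ⟨M, hM⟩ := hf.2.1
  obtain ⟨δ, hδ, hsub⟩ := mem_nhdsGT_iff_exists_Ioo_subset.1 hM
  obtain ⟨B, hB⟩ := isCompact_Icc.bddAbove_image ((continuousOn_rpow_mul_abs p hf.1).mono
    fun t (ht : t ∈ Icc (min δ 1) 1) => (lt_min (mem_Ioi.1 hδ) one_pos).trans_le ht.1)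
  refine ⟨max M B, ?_⟩
  rintro _ ⟨t, ht, rfl⟩
  rcases lt_or_ge t (min δ 1) with htδ | htδ
  · exact (hsub ⟨ht.1, htδ.trans_le (min_le_left _ _)⟩).trans (le_max_left _ _)
  · exact (hB ⟨t, ⟨htδ, ht.2.le⟩, rfl⟩).trans (le_max_right _ _)

theorem MemApq.bddAbove_Ici (hf : MemApq p q f) :
    BddAbove ((fun t => t ^ q * |f t|) '' Ici 1) := by
  obtain ⟨M, hM⟩ := hf.2.2
  obtain ⟨R, hR⟩ := eventually_atTop.1 hM
  obtain ⟨B, hB⟩ := isCompact_Icc.bddAbove_image ((continuousOn_rpow_mul_abs q hf.1).mono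
    fun t (ht : t ∈ Icc 1 R) => one_pos.trans_le ht.1)
  refine ⟨max M B, ?_⟩
  rintro _ ⟨t, ht, rfl⟩
  rcases le_or_gt t R with htR | htR
  · exact (hB ⟨t, ⟨ht, htR⟩, rfl⟩).trans (le_max_right _ _)
  · exact (hR t htR.le).trans (le_max_left _ _)

theorem MemApq.apqWeight_mul_abs_le (hf : MemApq p q f) {t : ℝ} (ht : 0 < t) :
    apqWeight p q t * |f t| ≤ normApq p q f := by
  unfold apqWeight normApq
  split_ifs with ht1
  · exact (le_csSup hf.bddAbove_Ioo ⟨t, ⟨ht, ht1⟩, rfl⟩).trans (le_max_left _ _)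
  · exact (le_csSup hf.bddAbove_Ici ⟨t, not_lt.1 ht1, rfl⟩).trans (le_max_right _ _)

theorem MemApq.normApq_nonneg (hf : MemApq p q f) : 0 ≤ normApq p q f :=
  (mul_nonneg (apqWeight_pos one_pos).le (abs_nonneg _)).trans (hf.apqWeight_mul_abs_le one_pos)

theorem normApq_le_of_forall (h : ∀ t, 0 < t → apqWeight p q t * |f t| ≤ B) :
    normApq p q f ≤ B := by
  refine max_le (csSup_le (Nonempty.image _ ⟨1 / 2, by norm_num, by norm_num⟩) ?_)
    (csSup_le (Nonempty.image _ nonempty_Ici) ?_)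
  · rintro _ ⟨t, ht, rfl⟩
    simpa [apqWeight, ht.2] using h t ht.1
  · rintro _ ⟨t, ht, rfl⟩
    simpa [apqWeight, not_lt.2 (mem_Ici.1 ht)] using h t (one_pos.trans_le ht)

theorem memApq_of_forall (hc : ContinuousOn f (Ioi 0))
    (h : ∀ t, 0 < t → apqWeight p q t * |f t| ≤ B) : MemApq p q f := by
  refine ⟨hc, ⟨B, ?_⟩, ⟨B, ?_⟩⟩
  · filter_upwards [Ioo_mem_nhdsGT one_pos] with t ht
    simpa [apqWeight, ht.2] using h t ht.1
  · filter_upwards [eventually_ge_atTop 1] with t ht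
    simpa [apqWeight, not_lt.2 ht] using h t (one_pos.trans_le ht)

theorem MemApq.congr (hf : MemApq p q f) (hfg : EqOn f g (Ioi 0)) : MemApq p q g :=
  memApq_of_forall (hf.1.congr hfg.symm) fun _ ht => hfg ht ▸ hf.apqWeight_mul_abs_le ht

theorem normApq_congr (hfg : EqOn f g (Ioi 0)) : normApq p q f = normApq p q g := by
  unfold normApq
  congr 2
  · exact image_congr fun t ht => by rw [hfg ht.1]
  · exact image_congr fun t ht => by rw [hfg (mem_Ioi.2 (one_pos.trans_le ht))]

theorem MemApq.apqWeight_mul_abs_comp_mul_le (hf : MemApq p q f) {t u : ℝ} (ht : 0 < t)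
    (hu : 1 ≤ u) : apqWeight p q t * |f (u * t)| ≤ normApq p q f * u ^ (-min p q) := by
  have hu0 : 0 < u := one_pos.trans_le hu
  have hw := rpow_min_mul_apqWeight_le (p := p) (q := q) hu ht
  calc apqWeight p q t * |f (u * t)|
      = u ^ (-min p q) * (u ^ min p q * apqWeight p q t * |f (u * t)|) := by
        rw [Real.rpow_neg hu0.le]; field_simp
    _ ≤ u ^ (-min p q) * normApq p q f := by
        gcongr
        exact (mul_le_mul_of_nonneg_right hw (abs_nonneg _)).trans
          (hf.apqWeight_mul_abs_le (mul_pos hu0 ht))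
    _ = normApq p q f * u ^ (-min p q) := mul_comm _ _

end Apq

theorem summable_nat_add_one_rpow_neg {s : ℝ} (hs : 1 < s) :
    Summable fun n : ℕ => ((n : ℝ) + 1) ^ (-s) := by
  have h := (summable_nat_add_iff 1).2 (Real.summable_nat_rpow.2 (neg_lt_neg hs))
  exact_mod_cast h

theorem zetaR_nonneg (s : ℝ) : 0 ≤ zetaR s :=
  tsum_nonneg fun _ => by positivity

noncomputable def dilationSeries (a : ℕ → ℝ) (f : ℝ → ℝ) (t : ℝ) : ℝ :=
  ∑' n : ℕ, a n * f (((n : ℝ) + 1) * t)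

theorem Tk_zero_eq_dilationSeries (f : ℝ → ℝ) : Tk 0 f = dilationSeries (fun _ => 1) f := by
  funext t; simp [Tk, dilationSeries]

theorem dilationSeries_congr {a : ℕ → ℝ} {f g : ℝ → ℝ} (hfg : EqOn f g (Ioi 0)) :
    EqOn (dilationSeries a f) (dilationSeries a g) (Ioi 0) := fun t ht =>
  tsum_congr fun n => by rw [hfg (mem_Ioi.2 (mul_pos (by positivity) ht))]

section DilationSeries

variable {p q c K : ℝ} {a : ℕ → ℝ} {f : ℝ → ℝ}

theorem MemApq.apqWeight_mul_abs_dilation_term_le (hf : MemApq p q f)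
    (ha : ∀ n, |a n| ≤ K * ((n : ℝ) + 1) ^ c) {t : ℝ} (ht : 0 < t) (n : ℕ) :
    apqWeight p q t * |a n * f (((n : ℝ) + 1) * t)| ≤
      K * normApq p q f * ((n : ℝ) + 1) ^ (-(min p q - c)) := by
  have hn : (0 : ℝ) < (n : ℝ) + 1 := by positivity
  calc apqWeight p q t * |a n * f (((n : ℝ) + 1) * t)|
      = |a n| * (apqWeight p q t * |f (((n : ℝ) + 1) * t)|) := by rw [abs_mul]; ring
    _ ≤ K * ((n : ℝ) + 1) ^ c * (normApq p q f * ((n : ℝ) + 1) ^ (-min p q)) :=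
        mul_le_mul (ha n) (hf.apqWeight_mul_abs_comp_mul_le ht (by simp))
          (mul_nonneg (apqWeight_pos ht).le (abs_nonneg _)) ((abs_nonneg _).trans (ha n))
    _ = K * normApq p q f * ((n : ℝ) + 1) ^ (-(min p q - c)) := by
        rw [neg_sub, sub_eq_add_neg, Real.rpow_add hn]; ring

theorem MemApq.abs_dilation_term_le (hp : 0 ≤ p) (hq : 0 ≤ q) (hf : MemApq p q f)
    (ha : ∀ n, |a n| ≤ K * ((n : ℝ) + 1) ^ c) {s t : ℝ} (hs : 0 < s) (hst : s ≤ t) (n : ℕ) :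
    |a n * f (((n : ℝ) + 1) * t)| ≤
      K * normApq p q f / apqWeight p q s * ((n : ℝ) + 1) ^ (-(min p q - c)) := by
  rw [div_mul_eq_mul_div, le_div_iff₀ (apqWeight_pos hs), mul_comm]
  exact (mul_le_mul_of_nonneg_right (apqWeight_le_apqWeight hp hq hs hst) (abs_nonneg _)).trans
    (hf.apqWeight_mul_abs_dilation_term_le ha (hs.trans_le hst) n)

theorem MemApq.summable_dilation_term (hf : MemApq p q f)
    (ha : ∀ n, |a n| ≤ K * ((n : ℝ) + 1) ^ c) (hc : c + 1 < min p q) {t : ℝ} (ht : 0 < t) :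
    Summable fun n => a n * f (((n : ℝ) + 1) * t) := by
  refine Summable.of_norm_bounded
    ((summable_nat_add_one_rpow_neg (s := min p q - c) (by linarith)).mul_left
      (K * normApq p q f / apqWeight p q t)) fun n => ?_
  rw [Real.norm_eq_abs, div_mul_eq_mul_div, le_div_iff₀ (apqWeight_pos ht), mul_comm]
  exact hf.apqWeight_mul_abs_dilation_term_le ha ht n

theorem MemApq.apqWeight_mul_abs_dilationSeries_le (hf : MemApq p q f)
    (ha : ∀ n, |a n| ≤ K * ((n : ℝ) + 1) ^ c) (hc : c + 1 < min p q) {t : ℝ} (ht : 0 < t) :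
    apqWeight p q t * |dilationSeries a f t| ≤ K * zetaR (min p q - c) * normApq p q f := by
  have hsum := (hf.summable_dilation_term ha hc ht).abs
  calc apqWeight p q t * |dilationSeries a f t|
      ≤ apqWeight p q t * ∑' n, |a n * f (((n : ℝ) + 1) * t)| := by
        have h := norm_tsum_le_tsum_norm (f := fun n => a n * f (((n : ℝ) + 1) * t)) hsum
        simp only [Real.norm_eq_abs] at h
        exact mul_le_mul_of_nonneg_left h (apqWeight_pos ht).le
    _ = ∑' n, apqWeight p q t * |a n * f (((n : ℝ) + 1) * t)| := tsum_mul_left.symm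
    _ ≤ ∑' n : ℕ, K * normApq p q f * ((n : ℝ) + 1) ^ (-(min p q - c)) :=
        (hsum.mul_left _).tsum_le_tsum (hf.apqWeight_mul_abs_dilation_term_le ha ht)
          ((summable_nat_add_one_rpow_neg (s := min p q - c) (by linarith)).mul_left _)
    _ = K * zetaR (min p q - c) * normApq p q f := by rw [tsum_mul_left, zetaR]; ring

theorem MemApq.continuousOn_dilationSeries (hp : 0 ≤ p) (hq : 0 ≤ q) (hf : MemApq p q f)
    (ha : ∀ n, |a n| ≤ K * ((n : ℝ) + 1) ^ c) (hc : c + 1 < min p q) :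
    ContinuousOn (dilationSeries a f) (Ioi 0) := by
  intro x hx
  have hx2 : (0 : ℝ) < x / 2 := half_pos hx
  have hcont : ContinuousOn (dilationSeries a f) (Ioi (x / 2)) := by
    refine continuousOn_tsum (fun n => continuousOn_const.mul (hf.1.comp
        (continuousOn_const.mul continuousOn_id) fun y hy => ?_))
      ((summable_nat_add_one_rpow_neg (s := min p q - c) (by linarith)).mul_left _)
      fun n y hy => hf.abs_dilation_term_le hp hq ha hx2 (le_of_lt hy) n
    exact mul_pos (by positivity) (hx2.trans hy)
  exact (hcont.continuousAt (Ioi_mem_nhds (half_lt_self hx))).continuousWithinAt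

theorem MemApq.memApq_dilationSeries (hp : 0 ≤ p) (hq : 0 ≤ q) (hf : MemApq p q f)
    (ha : ∀ n, |a n| ≤ K * ((n : ℝ) + 1) ^ c) (hc : c + 1 < min p q) :
    MemApq p q (dilationSeries a f) :=
  memApq_of_forall (hf.continuousOn_dilationSeries hp hq ha hc)
    fun _ ht => hf.apqWeight_mul_abs_dilationSeries_le ha hc ht

theorem MemApq.normApq_dilationSeries_le (hf : MemApq p q f)
    (ha : ∀ n, |a n| ≤ K * ((n : ℝ) + 1) ^ c) (hc : c + 1 < min p q) :
    normApq p q (dilationSeries a f) ≤ K * zetaR (min p q - c) * normApq p q f :=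
  normApq_le_of_forall fun _ ht => hf.apqWeight_mul_abs_dilationSeries_le ha hc ht

theorem MemApq.hasDerivAt_dilationSeries {p' q' : ℝ} {f' : ℝ → ℝ} (hf : MemApq p q f)
    (hf' : MemApq p' q' f') (hp' : 0 ≤ p') (hq' : 0 ≤ q')
    (hder : ∀ y, 0 < y → HasDerivAt f (f' y) y)
    (ha : ∀ n, |a n| ≤ K * ((n : ℝ) + 1) ^ c) (hc : c + 1 < min p q)
    (hc' : c + 2 < min p' q') {x : ℝ} (hx : 0 < x) :
    HasDerivAt (dilationSeries a f) (dilationSeries (fun n => a n * ((n : ℝ) + 1)) f' x) x := by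
  have hx2 : (0 : ℝ) < x / 2 := half_pos hx
  have ha' : ∀ n, |a n * ((n : ℝ) + 1)| ≤ K * ((n : ℝ) + 1) ^ (c + 1) := fun n => by
    have hn : (0 : ℝ) < (n : ℝ) + 1 := by positivity
    rw [abs_mul, abs_of_pos hn, Real.rpow_add_one hn.ne', ← mul_assoc]
    exact mul_le_mul_of_nonneg_right (ha n) hn.le
  refine hasDerivAt_tsum_of_isPreconnected (g := fun n z => a n * f (((n : ℝ) + 1) * z))
    (g' := fun n z => a n * ((n : ℝ) + 1) * f' (((n : ℝ) + 1) * z))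
    ((summable_nat_add_one_rpow_neg (s := min p' q' - (c + 1)) (by linarith)).mul_left
      (K * normApq p' q' f' / apqWeight p' q' (x / 2))) isOpen_Ioi isPreconnected_Ioi
    (fun n y hy => ?_) (fun n y hy => ?_) (half_lt_self hx)
    (hf.summable_dilation_term ha hc hx) (half_lt_self hx)
  · have hny : 0 < ((n : ℝ) + 1) * y := mul_pos (by positivity) (hx2.trans hy)
    have h := ((hder _ hny).comp y ((hasDerivAt_id y).const_mul ((n : ℝ) + 1))).const_mul (a n)
    rw [mul_one, ← mul_assoc, mul_right_comm] at h
    exact h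
  · rw [Real.norm_eq_abs]
    exact hf'.abs_dilation_term_le hp' hq' ha' hx2 (le_of_lt hy) n

end DilationSeries

section MoebiusInversion

open ArithmeticFunction

variable {p q : ℝ} {f : ℝ → ℝ}

theorem MemApq.hasSum_moebius_dilation (hf : MemApq p q f) (hpq : 1 < min p q) {t : ℝ}
    (ht : 0 < t) :
    HasSum (fun x : ℕ × ℕ =>
      (moebius (x.1 + 1) : ℝ) * f (((x.1 : ℝ) + 1) * (((x.2 : ℝ) + 1) * t))) (f t) := by
  have h := hasSum_moebius_succ_mul (w := fun d => f (d * t))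
    (C := normApq p q f / apqWeight p q t) (neg_lt_neg hpq) fun d hd => by
      rw [div_mul_eq_mul_div, le_div_iff₀ (apqWeight_pos ht), mul_comm]
      exact hf.apqWeight_mul_abs_comp_mul_le ht (by exact_mod_cast hd)
  simpa [mul_assoc] using h

theorem MemApq.Tk_zero_dilationSeries_moebius (hf : MemApq p q f) (hpq : 1 < min p q) :
    EqOn (Tk 0 (dilationSeries (fun n => (moebius (n + 1) : ℝ)) f)) f (Ioi 0) := by
  intro t ht
  have h := hf.hasSum_moebius_dilation hpq ht
  have hs : Summable (Function.uncurry fun n m : ℕ =>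
      (moebius (n + 1) : ℝ) * f (((n : ℝ) + 1) * (((m : ℝ) + 1) * t))) := h.summable
  calc Tk 0 (dilationSeries (fun n => (moebius (n + 1) : ℝ)) f) t
      = ∑' (m : ℕ) (n : ℕ), (moebius (n + 1) : ℝ) * f (((n : ℝ) + 1) * (((m : ℝ) + 1) * t)) := by
        simp only [Tk, dilationSeries, pow_zero, one_mul]
    _ = f t := by rw [hs.tsum_comm, ← h.summable.tsum_prod, h.tsum_eq]

theorem MemApq.dilationSeries_moebius_Tk_zero (hf : MemApq p q f) (hpq : 1 < min p q) :
    EqOn (dilationSeries (fun n => (moebius (n + 1) : ℝ)) (Tk 0 f)) f (Ioi 0) := by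
  intro t ht
  have h := hf.hasSum_moebius_dilation hpq ht
  calc dilationSeries (fun n => (moebius (n + 1) : ℝ)) (Tk 0 f) t
      = ∑' (n : ℕ) (m : ℕ), (moebius (n + 1) : ℝ) * f (((n : ℝ) + 1) * (((m : ℝ) + 1) * t)) := by
        simp only [Tk, dilationSeries, pow_zero, one_mul, ← tsum_mul_left, mul_left_comm]
    _ = f t := by rw [← h.summable.tsum_prod, h.tsum_eq]

end MoebiusInversion

theorem ContDiffOn.hasDerivAt_iteratedDerivWithin {s : Set ℝ} {f : ℝ → ℝ} {n m : ℕ}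
    (hf : ContDiffOn ℝ n f s) (hs : IsOpen s) (hm : m < n) {y : ℝ} (hy : y ∈ s) :
    HasDerivAt (iteratedDerivWithin m f s) (iteratedDerivWithin (m + 1) f s y) y := by
  rw [iteratedDerivWithin_succ, derivWithin_of_isOpen hs hy]
  exact ((hf.differentiableOn_iteratedDerivWithin (by exact_mod_cast hm) hs.uniqueDiffOn y
    hy).differentiableAt (hs.mem_nhds hy)).hasDerivAt

theorem abs_mul_pow_le {a : ℕ → ℝ} {K : ℝ} (ha : ∀ n, |a n| ≤ K) (i n : ℕ) :
    |a n * ((n : ℝ) + 1) ^ i| ≤ K * ((n : ℝ) + 1) ^ (i : ℝ) := by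
  have hn : (0 : ℝ) ≤ ((n : ℝ) + 1) ^ i := by positivity
  rw [abs_mul, abs_of_nonneg hn, Real.rpow_natCast]
  exact mul_le_mul_of_nonneg_right (ha n) hn

theorem normApqK_congr {k : ℕ} {p q : Fin (k + 1) → ℝ} {f g : ℝ → ℝ} (hfg : EqOn f g (Ioi 0)) :
    normApqK k p q f = normApqK k p q g :=
  Finset.sum_congr rfl fun _ _ => normApq_congr (iteratedDerivWithin_congr hfg)

theorem MemApqK.memApq_zero {k : ℕ} {p q : Fin (k + 1) → ℝ} {f : ℝ → ℝ}
    (hf : MemApqK k p q f) : MemApq (p 0) (q 0) f := by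
  simpa using hf.2 0

section DilationSeriesK

variable {k : ℕ} {p q : Fin (k + 1) → ℝ} {f : ℝ → ℝ} {a : ℕ → ℝ} {K : ℝ}

theorem MemApqK.hasDerivAt_dilationSeries_iteratedDerivWithin (hf : MemApqK k p q f)
    (hp : ∀ i : Fin (k + 1), ((i : ℕ) : ℝ) + 1 < p i)
    (hq : ∀ i : Fin (k + 1), ((i : ℕ) : ℝ) + 1 < q i) (ha : ∀ n, |a n| ≤ K)
    {i : ℕ} (hi : i < k) {x : ℝ} (hx : 0 < x) :
    HasDerivAt (dilationSeries (fun n => a n * ((n : ℝ) + 1) ^ i) (iteratedDerivWithin i f (Ioi 0)))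
      (dilationSeries (fun n => a n * ((n : ℝ) + 1) ^ (i + 1))
        (iteratedDerivWithin (i + 1) f (Ioi 0)) x) x := by
  have h := (hf.2 ⟨i, by omega⟩).hasDerivAt_dilationSeries (hf.2 ⟨i + 1, by omega⟩)
    (by linarith [hp ⟨i + 1, by omega⟩]) (by linarith [hq ⟨i + 1, by omega⟩])
    (fun y hy => hf.1.hasDerivAt_iteratedDerivWithin isOpen_Ioi (by exact_mod_cast hi) hy)
    (abs_mul_pow_le ha i) (lt_min (hp ⟨i, by omega⟩) (hq ⟨i, by omega⟩))
    (by have := lt_min (hp ⟨i + 1, by omega⟩) (hq ⟨i + 1, by omega⟩); push_cast at this; linarith)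
    hx
  simpa only [mul_assoc, ← pow_succ] using h

theorem MemApqK.eqOn_iteratedDerivWithin_dilationSeries (hf : MemApqK k p q f)
    (hp : ∀ i : Fin (k + 1), ((i : ℕ) : ℝ) + 1 < p i)
    (hq : ∀ i : Fin (k + 1), ((i : ℕ) : ℝ) + 1 < q i) (ha : ∀ n, |a n| ≤ K) {i : ℕ} (hi : i ≤ k) :
    EqOn (iteratedDerivWithin i (dilationSeries a f) (Ioi 0))
      (dilationSeries (fun n => a n * ((n : ℝ) + 1) ^ i) (iteratedDerivWithin i f (Ioi 0)))
      (Ioi 0) := by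
  induction i with
  | zero => intro x _; simp [dilationSeries]
  | succ i ih =>
    intro x hx
    rw [iteratedDerivWithin_succ, derivWithin_of_isOpen isOpen_Ioi hx,
      ((ih (by omega)).eventuallyEq_of_mem (isOpen_Ioi.mem_nhds hx)).deriv_eq]
    exact (hf.hasDerivAt_dilationSeries_iteratedDerivWithin hp hq ha (by omega) hx).deriv

theorem memApqK_dilationSeries (hf : MemApqK k p q f)
    (hp : ∀ i : Fin (k + 1), ((i : ℕ) : ℝ) + 1 < p i)
    (hq : ∀ i : Fin (k + 1), ((i : ℕ) : ℝ) + 1 < q i) (ha : ∀ n, |a n| ≤ K) :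
    MemApqK k p q (dilationSeries a f) := by
  have hpq : ∀ i : Fin (k + 1), ((i : ℕ) : ℝ) + 1 < min (p i) (q i) := fun i => lt_min (hp i) (hq i)
  refine ⟨contDiffOn_of_continuousOn_differentiableOn_deriv (fun m hm => ?_) (fun m hm => ?_),
    fun i => ?_⟩
  · have hm : m < k + 1 := Nat.lt_succ_of_le (by exact_mod_cast hm)
    exact ((hf.2 ⟨m, hm⟩).continuousOn_dilationSeries (by linarith [hp ⟨m, hm⟩])
      (by linarith [hq ⟨m, hm⟩]) (abs_mul_pow_le ha m) (hpq ⟨m, hm⟩)).congr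
      (hf.eqOn_iteratedDerivWithin_dilationSeries hp hq ha (by omega))
  · have hm : m < k := by exact_mod_cast hm
    exact fun x hx => (hf.hasDerivAt_dilationSeries_iteratedDerivWithin hp hq ha hm hx
      |>.differentiableAt.differentiableWithinAt).congr
      (hf.eqOn_iteratedDerivWithin_dilationSeries hp hq ha hm.le)
      (hf.eqOn_iteratedDerivWithin_dilationSeries hp hq ha hm.le hx)
  · exact ((hf.2 i).memApq_dilationSeries (by linarith [hp i]) (by linarith [hq i])
      (abs_mul_pow_le ha i) (hpq i)).congr
      (hf.eqOn_iteratedDerivWithin_dilationSeries hp hq ha (by omega)).symm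

theorem normApqK_dilationSeries_le (hf : MemApqK k p q f)
    (hp : ∀ i : Fin (k + 1), ((i : ℕ) : ℝ) + 1 < p i)
    (hq : ∀ i : Fin (k + 1), ((i : ℕ) : ℝ) + 1 < q i) (ha : ∀ n, |a n| ≤ K) :
    normApqK k p q (dilationSeries a f) ≤
      K * (∑ i : Fin (k + 1), zetaR (min (p i) (q i) - i)) * normApqK k p q f := by
  have hK : 0 ≤ K := (abs_nonneg _).trans (ha 0)
  have hnorm : ∀ i : Fin (k + 1),
      normApq (p i) (q i) (iteratedDerivWithin i f (Ioi 0)) ≤ normApqK k p q f := fun i =>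
    Finset.single_le_sum (fun j _ => (hf.2 j).normApq_nonneg) (Finset.mem_univ i)
  calc normApqK k p q (dilationSeries a f)
      = ∑ i : Fin (k + 1), normApq (p i) (q i)
          (iteratedDerivWithin i (dilationSeries a f) (Ioi 0)) := rfl
    _ ≤ ∑ i : Fin (k + 1), K * zetaR (min (p i) (q i) - i) * normApqK k p q f := by
        refine Finset.sum_le_sum fun i _ => ?_
        rw [normApq_congr (hf.eqOn_iteratedDerivWithin_dilationSeries hp hq ha (by omega))]
        exact ((hf.2 i).normApq_dilationSeries_le (abs_mul_pow_le ha i)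
          (lt_min (hp i) (hq i))).trans
          (mul_le_mul_of_nonneg_left (hnorm i) (mul_nonneg hK (zetaR_nonneg _)))
    _ = K * (∑ i : Fin (k + 1), zetaR (min (p i) (q i) - i)) * normApqK k p q f := by
        rw [Finset.mul_sum, Finset.sum_mul]

end DilationSeriesK

/-- `T_0` is a bounded linear operator on `A_{p,q;k}` when
`p_i, q_i > i+1`, and it is an isomorphism of Banach spaces when moreover
`p_i ≥ q_i > ζ^{−1}(2) + i` for all `i`. -/
theorem stmt8 (k : ℕ) (p q : Fin (k + 1) → ℝ)
    (hp : ∀ i : Fin (k + 1), ((i : ℕ) : ℝ) + 1 < p i)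
    (hq : ∀ i : Fin (k + 1), ((i : ℕ) : ℝ) + 1 < q i) :
    ((∀ f : ℝ → ℝ, MemApqK k p q f → MemApqK k p q (Tk 0 f)) ∧
     (∀ f g : ℝ → ℝ, MemApqK k p q f → MemApqK k p q g → ∀ t : ℝ, 0 < t →
        Tk 0 (f + g) t = Tk 0 f t + Tk 0 g t) ∧
     (∀ (c : ℝ) (f : ℝ → ℝ), MemApqK k p q f → ∀ t : ℝ, 0 < t →
        Tk 0 (c • f) t = c * Tk 0 f t) ∧
     (∃ M : ℝ, 0 ≤ M ∧ ∀ f : ℝ → ℝ, MemApqK k p q f →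
        normApqK k p q (Tk 0 f) ≤ M * normApqK k p q f)) ∧
    (∀ s : ℝ, 1 < s → zetaR s = 2 →
      (∀ i : Fin (k + 1), q i ≤ p i ∧ s + ((i : ℕ) : ℝ) < q i) →
      ((∀ f g : ℝ → ℝ, MemApqK k p q f → MemApqK k p q g →
          Set.EqOn (Tk 0 f) (Tk 0 g) (Set.Ioi 0) → Set.EqOn f g (Set.Ioi 0)) ∧
       (∀ g : ℝ → ℝ, MemApqK k p q g →
          ∃ f : ℝ → ℝ, MemApqK k p q f ∧ Set.EqOn (Tk 0 f) g (Set.Ioi 0)) ∧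
       (∃ M : ℝ, 0 ≤ M ∧ ∀ f : ℝ → ℝ, MemApqK k p q f →
          normApqK k p q f ≤ M * normApqK k p q (Tk 0 f)))) := by
  set S := dilationSeries fun n => (ArithmeticFunction.moebius (n + 1) : ℝ)
  set M := ∑ i : Fin (k + 1), zetaR (min (p i) (q i) - i)
  have hone : ∀ n : ℕ, |(1 : ℝ)| ≤ 1 := fun _ => abs_one.le
  have hmoeb : ∀ n : ℕ, |(ArithmeticFunction.moebius (n + 1) : ℝ)| ≤ 1 := fun _ => by
    exact_mod_cast ArithmeticFunction.abs_moebius_le_one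
  have hpq0 : 1 < min (p 0) (q 0) := by simpa using lt_min (hp 0) (hq 0)
  have hT : ∀ f, MemApqK k p q f → MemApqK k p q (Tk 0 f) := fun f hf => by
    rw [Tk_zero_eq_dilationSeries]; exact memApqK_dilationSeries hf hp hq hone
  have hST : ∀ f, MemApqK k p q f → EqOn (S (Tk 0 f)) f (Ioi 0) := fun f hf =>
    hf.memApq_zero.dilationSeries_moebius_Tk_zero hpq0
  have hsum : ∀ f, MemApqK k p q f → ∀ t, 0 < t → Summable fun n : ℕ => f (((n : ℝ) + 1) * t) :=
    fun f hf t ht => by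
      simpa using hf.memApq_zero.summable_dilation_term (a := fun _ => 1) (K := 1) (c := 0)
        (fun _ => by simp) (by simpa using hpq0) ht
  refine ⟨⟨hT, fun f g hf hg t ht => ?_, fun c f _ t _ => ?_, ⟨M, ?_, fun f hf => ?_⟩⟩,
    fun _ _ _ _ => ⟨fun f g hf hg hfg => ?_, fun g hg => ?_, ⟨M, ?_, fun f hf => ?_⟩⟩⟩
  · simpa [Tk] using (hsum f hf t ht).tsum_add (hsum g hg t ht)
  · simpa [Tk] using tsum_mul_left
  · exact Finset.sum_nonneg fun _ _ => zetaR_nonneg _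
  · simpa [Tk_zero_eq_dilationSeries] using normApqK_dilationSeries_le hf hp hq hone
  · exact fun t ht => (hST f hf ht).symm.trans
      ((dilationSeries_congr hfg ht).trans (hST g hg ht))
  · exact ⟨S g, memApqK_dilationSeries hg hp hq hmoeb,
      hg.memApq_zero.Tk_zero_dilationSeries_moebius hpq0⟩
  · exact Finset.sum_nonneg fun _ _ => zetaR_nonneg _
  · rw [← normApqK_congr (hST f hf)]
    simpa using normApqK_dilationSeries_le (hT f hf) hp hq hmoeb
end

section
/- Let W ∈ C²((0,∞)) satisfy |W^{(i)}(t)| ≤ C·t^{−α−i} for all t ≥ R and i ∈ {0,1,2}, for some C, R > 0 and α > 2. Then the function G : (0,∞)² → ℝ defined by G(a,b) := 2·J(a,b)/(a − b)² when a ≠ b, and G(a,a) := A(a), is continuous on (0,∞)². -/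
open Filter Set

/-- `J(a,b) = −(1/4) ∑_{j=2}^∞ (j−1) W(aj) − (1/4) ∑_{j=2}^∞ (j−1) W(bj)
  + (1/2) ∑_{i,j=1}^∞ W(bj + ai)`. -/
noncomputable def Jfun (W : ℝ → ℝ) (a b : ℝ) : ℝ :=
  -(1 / 4) * ∑' j : ℕ, ((j : ℝ) + 1) * W (a * ((j : ℝ) + 2))
  - (1 / 4) * ∑' j : ℕ, ((j : ℝ) + 1) * W (b * ((j : ℝ) + 2))
  + (1 / 2) * ∑' p : ℕ × ℕ, W (b * ((p.1 : ℝ) + 1) + a * ((p.2 : ℝ) + 1))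

/-- `A(a) = (1/12) ∑_{j=2}^∞ (j − j³) W''(aj)`. -/
noncomputable def Afun (W : ℝ → ℝ) (a : ℝ) : ℝ :=
  (1 / 12) * ∑' j : ℕ,
    (((j : ℝ) + 2) - ((j : ℝ) + 2) ^ 3) * deriv (deriv W) (a * ((j : ℝ) + 2))

/-!
Group the double series in `2 J(a, b)` along the anti-diagonals `i + j = n` and expand every
value of `W` in the `n`-th group to second order about `a (n + 2)`, with integral remainder.
Within each group the values and the first-order terms cancel, so
`2 J(a, b) = (a - b)² ∑ₙ gₙ(a, b)`, where each `gₙ` is built from integrals of `W''` only, is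
continuous on all of `(0, ∞)²`, and `gₙ(a, a)` is the `n`-th term of `A(a)`. On `[ε, ∞)²` the
decay of `W''` gives `|gₙ| ≲ n³ · n^(-α-2)`, so for `α > 2` the series `∑ₙ gₙ` converges
uniformly there and its sum, which equals `G`, is continuous.
-/

open MeasureTheory Finset.HasAntidiagonal

/-- With `f = W''`, the integral remainder of the second-order Taylor expansion of `W` about `p`.
The argument is clamped at `δ` so that the kernel is jointly continuous in `(p, y)` while `f` is
only continuous on `[δ, ∞)`; on segments inside `[δ, ∞)` the clamp is inactive. -/
noncomputable def taylorKernel (f : ℝ → ℝ) (δ p y : ℝ) : ℝ :=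
  ∫ u in (0 : ℝ)..1, (1 - u) * f (max (p + u * y) δ)

lemma le_add_mul_of_le_of_le {s p y u : ℝ} (hp : s ≤ p) (hpy : s ≤ p + y) (hu₀ : 0 ≤ u)
    (hu₁ : u ≤ 1) : s ≤ p + u * y := by
  nlinarith

lemma continuous_taylorKernel {f : ℝ → ℝ} {δ : ℝ} (hf : ContinuousOn f (Ici δ)) :
    Continuous fun q : ℝ × ℝ => taylorKernel f δ q.1 q.2 := by
  have hclamp : Continuous fun t => f (max t δ) :=
    hf.comp_continuous (continuous_id.max continuous_const) fun t => le_max_right t δ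
  exact intervalIntegral.continuous_parametric_intervalIntegral_of_continuous'
    ((continuous_const.sub continuous_snd).mul (hclamp.comp (by fun_prop))) 0 1

lemma taylorKernel_zero (f : ℝ → ℝ) (δ p : ℝ) :
    taylorKernel f δ p 0 = f (max p δ) / 2 := by
  rw [taylorKernel]
  simp only [mul_zero, add_zero]
  rw [intervalIntegral.integral_mul_const, intervalIntegral.integral_sub intervalIntegrable_const
    intervalIntegral.intervalIntegrable_id]
  norm_num
  ring

lemma abs_taylorKernel_le {f : ℝ → ℝ} {δ s p y B : ℝ} (hδs : δ ≤ s) (hp : s ≤ p)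
    (hpy : s ≤ p + y) (hB : ∀ t, s ≤ t → |f t| ≤ B) : |taylorKernel f δ p y| ≤ B := by
  have hint := intervalIntegral.norm_integral_le_of_norm_le_const (a := 0) (b := 1) (C := B)
    (f := fun u => (1 - u) * f (max (p + u * y) δ)) fun u hu => by
      rw [uIoc_of_le zero_le_one] at hu
      have hseg := le_add_mul_of_le_of_le hp hpy hu.1.le hu.2
      rw [Real.norm_eq_abs, abs_mul, max_eq_left (hδs.trans hseg)]
      have h1u : |1 - u| ≤ 1 := abs_le.2 ⟨by linarith [hu.2], by linarith [hu.1]⟩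
      calc |1 - u| * |f (p + u * y)| ≤ 1 * B :=
            mul_le_mul h1u (hB _ hseg) (abs_nonneg _) zero_le_one
        _ = B := one_mul B
  simpa [taylorKernel] using hint

theorem taylor_two_integral_remainder {W : ℝ → ℝ} (hW : ContDiffOn ℝ 2 W (Ioi 0))
    {δ p y : ℝ} (hδ : 0 < δ) (hp : δ ≤ p) (hpy : δ ≤ p + y) :
    W (p + y) = W p + y * deriv W p + y ^ 2 * taylorKernel (deriv (deriv W)) δ p y := by
  have hW' : ContDiffOn ℝ 1 (deriv W) (Ioi 0) := hW.deriv_of_isOpen isOpen_Ioi (by norm_num)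
  have hD : ContinuousOn (deriv (deriv W)) (Ioi 0) :=
    hW'.continuousOn_deriv_of_isOpen isOpen_Ioi le_rfl
  have hseg : ∀ u ∈ uIcc (0 : ℝ) 1, δ ≤ p + u * y := by
    intro u hu
    rw [uIcc_of_le zero_le_one] at hu
    exact le_add_mul_of_le_of_le hp hpy hu.1 hu.2
  have hline : ∀ u, HasDerivAt (fun u : ℝ => p + u * y) y u := fun u => by
    simpa using ((hasDerivAt_id u).mul_const y).const_add p
  have hderiv : ∀ u ∈ uIcc (0 : ℝ) 1, HasDerivAt
      (fun u => W (p + u * y) + (1 - u) * y * deriv W (p + u * y))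
      ((1 - u) * y ^ 2 * deriv (deriv W) (p + u * y)) u := by
    intro u hu
    have hpos : p + u * y ∈ Ioi 0 := hδ.trans_le (hseg u hu)
    have h₀ := ((hW.differentiableOn (by norm_num)).differentiableAt
      (Ioi_mem_nhds hpos)).hasDerivAt.comp u (hline u)
    have h₁ := ((hW'.differentiableOn one_ne_zero).differentiableAt
      (Ioi_mem_nhds hpos)).hasDerivAt.comp u (hline u)
    have hlin : HasDerivAt (fun u : ℝ => (1 - u) * y) (-y) u := by
      simpa using ((hasDerivAt_id u).const_sub 1).mul_const y
    exact (h₀.add (hlin.mul h₁)).congr_deriv (by simp only [Function.comp_apply]; ring)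
  have hint : IntervalIntegrable (fun u => (1 - u) * y ^ 2 * deriv (deriv W) (p + u * y))
      volume 0 1 :=
    ((continuous_const.sub continuous_id).continuousOn.mul continuousOn_const).mul
      (hD.comp (by fun_prop) fun u hu => hδ.trans_le (hseg u hu)) |>.intervalIntegrable
  have hFTC := intervalIntegral.integral_eq_sub_of_hasDerivAt hderiv hint
  have hkernel : y ^ 2 * taylorKernel (deriv (deriv W)) δ p y
      = ∫ u in (0 : ℝ)..1, (1 - u) * y ^ 2 * deriv (deriv W) (p + u * y) := by
    rw [taylorKernel, ← intervalIntegral.integral_const_mul]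
    refine intervalIntegral.integral_congr fun u hu => ?_
    simp only [max_eq_left (hseg u hu)]
    ring
  rw [hkernel, hFTC]
  simp

lemma exists_abs_le_mul_rpow_neg {f : ℝ → ℝ} {ε C R β : ℝ} (hε : 0 < ε) (hβ : 0 ≤ β)
    (hf : ContinuousOn f (Ici ε)) (htail : ∀ t, R ≤ t → |f t| ≤ C * t ^ (-β)) :
    ∃ M, 0 ≤ M ∧ ∀ s t, ε ≤ s → s ≤ t → |f t| ≤ M * s ^ (-β) := by
  obtain ⟨M₀, hM₀⟩ :=
    isCompact_Icc.exists_bound_of_continuousOn (hf.mono Icc_subset_Ici_self)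
  have hM : ∀ t, ε ≤ t → |f t| ≤ max (M₀ * R ^ β) C * t ^ (-β) := by
    intro t ht
    have htpos : 0 < t := hε.trans_le ht
    rcases le_or_gt t R with htR | hRt
    · have hscale : 1 ≤ R ^ β * t ^ (-β) := by
        rw [Real.rpow_neg htpos.le, ← div_eq_mul_inv, one_le_div (by positivity)]
        exact Real.rpow_le_rpow htpos.le htR hβ
      have hbound : |f t| ≤ M₀ := by simpa using hM₀ t ⟨ht, htR⟩
      calc |f t| ≤ M₀ := hbound
        _ ≤ M₀ * (R ^ β * t ^ (-β)) :=
            le_mul_of_one_le_right ((abs_nonneg _).trans hbound) hscale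
        _ = M₀ * R ^ β * t ^ (-β) := by ring
        _ ≤ _ := mul_le_mul_of_nonneg_right (le_max_left _ _) (by positivity)
    · exact (htail t hRt.le).trans
        (mul_le_mul_of_nonneg_right (le_max_right _ _) (by positivity))
  have hM_nonneg : 0 ≤ max (M₀ * R ^ β) C :=
    nonneg_of_mul_nonneg_left ((abs_nonneg _).trans (hM ε le_rfl)) (by positivity)
  refine ⟨_, hM_nonneg, fun s t hs hst => (hM t (hs.trans hst)).trans ?_⟩
  exact mul_le_mul_of_nonneg_left
    (Real.rpow_le_rpow_of_nonpos (hε.trans_le hs) hst (neg_nonpos.2 hβ)) hM_nonneg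

lemma summable_pow_mul_rpow_neg {k : ℕ} {c β : ℝ} (hc : 0 < c) (hβ : (k : ℝ) + 1 < β) :
    Summable fun n : ℕ => ((n : ℝ) + 2) ^ k * (c * ((n : ℝ) + 2)) ^ (-β) := by
  have hshift : Summable fun n : ℕ => ((n : ℝ) + 2) ^ ((k : ℝ) - β) := by
    simpa using (summable_nat_add_iff 2).2
      (Real.summable_nat_rpow.2 (by linarith : (k : ℝ) - β < -1))
  refine (hshift.mul_left (c ^ (-β))).congr fun n => ?_
  have hn : (0 : ℝ) < n + 2 := by positivity
  rw [Real.mul_rpow hc.le hn.le, Real.rpow_sub hn, Real.rpow_natCast, Real.rpow_neg hn.le]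
  field_simp

lemma tsum_eq_tsum_sum_antidiagonal {A α : Type*} [AddCommMonoid A] [Finset.HasAntidiagonal A]
    [AddCommMonoid α] [TopologicalSpace α] [ContinuousAdd α] [T3Space α] {g : A × A → α}
    (hg : Summable g) :
    ∑' p, g p = ∑' n, ∑ p ∈ antidiagonal n, g p := by
  rw [← Finset.HasAntidiagonal.sigmaAntidiagonalEquivProd.tsum_eq g]
  refine (Finset.HasAntidiagonal.sigmaAntidiagonalEquivProd.summable_iff.2 hg).tsum_sigma'
    (fun n => (hasSum_fintype _).summable) |>.trans (tsum_congr fun n => ?_)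
  rw [tsum_fintype]
  exact Finset.sum_coe_sort (antidiagonal n) g

lemma summable_of_abs_le_antidiagonal {g : ℕ × ℕ → ℝ} {v : ℕ → ℝ}
    (hg : ∀ p, |g p| ≤ v (p.1 + p.2)) (hv : Summable fun n : ℕ => ((n : ℝ) + 1) * v n) :
    Summable g := by
  refine Summable.of_norm_bounded (g := fun p => v (p.1 + p.2)) ?_ hg
  rw [← Finset.HasAntidiagonal.sigmaAntidiagonalEquivProd.summable_iff]
  have hv0 : ∀ n, 0 ≤ v n := fun n => (abs_nonneg _).trans (by simpa using hg (0, n))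
  refine (summable_sigma_of_nonneg fun x => hv0 _).2 ⟨fun n => Summable.of_finite, ?_⟩
  refine hv.congr fun n => ?_
  rw [tsum_fintype]
  have hfib : ∀ b : antidiagonal n, (b : ℕ × ℕ).1 + (b : ℕ × ℕ).2 = n :=
    fun b => Finset.HasAntidiagonal.mem_antidiagonal.1 b.2
  simp only [Finset.HasAntidiagonal.sigmaAntidiagonalEquivProd_apply, hfib, Finset.sum_const,
    Finset.card_univ, Fintype.card_coe, Finset.Nat.card_antidiagonal, nsmul_eq_mul]
  push_cast
  ring

lemma sum_range_succ_natCast_add_one (n : ℕ) :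
    ∑ k ∈ Finset.range (n + 1), ((k : ℝ) + 1) = ((n : ℝ) + 1) * (n + 2) / 2 := by
  induction n with
  | zero => norm_num
  | succ n ih => rw [Finset.sum_range_succ, ih]; push_cast; ring

lemma sum_range_succ_natCast_add_one_sq (n : ℕ) :
    ∑ k ∈ Finset.range (n + 1), ((k : ℝ) + 1) ^ 2
      = ((n : ℝ) + 1) * (n + 2) * (2 * n + 3) / 6 := by
  induction n with
  | zero => norm_num
  | succ n ih => rw [Finset.sum_range_succ, ih]; push_cast; ring

/-- `2 J(a, b) = ∑' p, jSummand W a b p`, because the anti-diagonal `p.1 + p.2 = j` has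
`j + 1` points. -/
noncomputable def jSummand (W : ℝ → ℝ) (a b : ℝ) (p : ℕ × ℕ) : ℝ :=
  W (b * (p.1 + 1) + a * (p.2 + 1)) - (W (a * (p.1 + p.2 + 2)) + W (b * (p.1 + p.2 + 2))) / 2

/-- `(a - b)² gTerm W'' δ n a b` is the sum of `jSummand W a b` over the anti-diagonal
`p.1 + p.2 = n`, once each value of `W` there is expanded about `a (n + 2)`
(`sum_antidiagonal_jSummand`). -/
noncomputable def gTerm (D : ℝ → ℝ) (δ : ℝ) (n : ℕ) (a b : ℝ) : ℝ :=
  ∑ k ∈ Finset.range (n + 1),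
    (((k : ℝ) + 1) ^ 2 * taylorKernel D δ (a * (n + 2)) ((b - a) * (k + 1))
      - ((n : ℝ) + 2) ^ 2 / 2 * taylorKernel D δ (a * (n + 2)) ((b - a) * (n + 2)))

lemma le_mul_add_sub_mul {ε a b m N : ℝ} (ha : ε ≤ a) (hb : ε ≤ b) (hm : 0 ≤ m)
    (hmN : m ≤ N) :
    ε * N ≤ a * N + (b - a) * m := by
  nlinarith

lemma continuous_gTerm {D : ℝ → ℝ} {δ : ℝ} (hD : ContinuousOn D (Ici δ)) (n : ℕ) :
    Continuous fun q : ℝ × ℝ => gTerm D δ n q.1 q.2 := by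
  have hψ := continuous_taylorKernel hD
  unfold gTerm
  fun_prop

lemma gTerm_self {D : ℝ → ℝ} {δ a : ℝ} {n : ℕ} (hδ : δ ≤ a * (n + 2)) :
    gTerm D δ n a a = 1 / 12 * (((n : ℝ) + 2) - (n + 2) ^ 3) * D (a * (n + 2)) := by
  simp only [gTerm, sub_self, zero_mul, taylorKernel_zero, max_eq_left hδ]
  rw [Finset.sum_sub_distrib, ← Finset.sum_mul, sum_range_succ_natCast_add_one_sq,
    Finset.sum_const, Finset.card_range, nsmul_eq_mul]
  push_cast
  ring

lemma abs_gTerm_le {D : ℝ → ℝ} {δ ε a b B : ℝ} {n : ℕ} (hδ : δ ≤ ε * (n + 2))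
    (ha : ε ≤ a) (hb : ε ≤ b) (hB : ∀ t, ε * (n + 2) ≤ t → |D t| ≤ B) :
    |gTerm D δ n a b| ≤ 2 * ((n : ℝ) + 2) ^ 3 * B := by
  have hN : (0 : ℝ) ≤ n := n.cast_nonneg
  have hψ : ∀ m : ℝ, 0 ≤ m → m ≤ n + 2 →
      |taylorKernel D δ (a * (n + 2)) ((b - a) * m)| ≤ B := fun m hm hmN =>
    abs_taylorKernel_le hδ (by nlinarith) (le_mul_add_sub_mul ha hb hm hmN) hB
  have hB0 : 0 ≤ B := (abs_nonneg _).trans (hB _ le_rfl)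
  have hterm : ∀ k ∈ Finset.range (n + 1),
      |((k : ℝ) + 1) ^ 2 * taylorKernel D δ (a * (n + 2)) ((b - a) * (k + 1))
        - ((n : ℝ) + 2) ^ 2 / 2 * taylorKernel D δ (a * (n + 2)) ((b - a) * (n + 2))|
        ≤ 3 / 2 * ((n : ℝ) + 2) ^ 2 * B := by
    intro k hk
    have hkn : (k : ℝ) + 1 ≤ n + 2 := by
      have := Finset.mem_range.1 hk
      have : (k : ℝ) ≤ n := by exact_mod_cast Nat.lt_succ_iff.1 this
      linarith
    have h₁ := hψ ((k : ℝ) + 1) (by positivity) hkn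
    have h₂ := hψ ((n : ℝ) + 2) (by positivity) le_rfl
    have hsq : ((k : ℝ) + 1) ^ 2 ≤ ((n : ℝ) + 2) ^ 2 := by gcongr
    calc _ ≤ ((k : ℝ) + 1) ^ 2 * |taylorKernel D δ (a * (n + 2)) ((b - a) * (k + 1))|
          + ((n : ℝ) + 2) ^ 2 / 2 * |taylorKernel D δ (a * (n + 2)) ((b - a) * (n + 2))| := by
          refine (abs_sub _ _).trans_eq ?_
          rw [abs_mul, abs_mul, abs_of_nonneg (by positivity : (0 : ℝ) ≤ ((k : ℝ) + 1) ^ 2),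
            abs_of_nonneg (by positivity : (0 : ℝ) ≤ ((n : ℝ) + 2) ^ 2 / 2)]
      _ ≤ ((n : ℝ) + 2) ^ 2 * B + ((n : ℝ) + 2) ^ 2 / 2 * B := by
          gcongr
      _ = _ := by ring
  calc |gTerm D δ n a b| ≤ ∑ _k ∈ Finset.range (n + 1), 3 / 2 * ((n : ℝ) + 2) ^ 2 * B :=
        (Finset.abs_sum_le_sum_abs _ _).trans (Finset.sum_le_sum hterm)
    _ = ((n : ℝ) + 1) * (3 / 2 * ((n : ℝ) + 2) ^ 2 * B) := by
        rw [Finset.sum_const, Finset.card_range, nsmul_eq_mul]; push_cast; ring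
    _ ≤ _ := by
        nlinarith [mul_nonneg (mul_nonneg hB0 (by positivity : (0 : ℝ) ≤ (n + 2) ^ 2)) hN]

lemma sum_antidiagonal_jSummand {W : ℝ → ℝ} (hW : ContDiffOn ℝ 2 W (Ioi 0)) {δ a b : ℝ}
    (hδ : 0 < δ) (ha : δ ≤ a) (hb : δ ≤ b) (n : ℕ) :
    ∑ p ∈ antidiagonal n, jSummand W a b p
      = (a - b) ^ 2 * gTerm (deriv (deriv W)) δ n a b := by
  set P := a * ((n : ℝ) + 2)
  have hP : δ ≤ P := by nlinarith [(n.cast_nonneg : (0 : ℝ) ≤ n)]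
  have htaylor : ∀ m : ℝ, 0 ≤ m → m ≤ n + 2 →
      W (P + (b - a) * m) = W P + (b - a) * m * deriv W P
      + ((b - a) * m) ^ 2 * taylorKernel (deriv (deriv W)) δ P ((b - a) * m) :=
    fun m hm hmN => taylor_two_integral_remainder hW hδ hP (by
      have := le_mul_add_sub_mul ha hb hm hmN; nlinarith)
  have hterm : ∀ k ∈ Finset.range (n + 1), jSummand W a b (k, n - k)
      = (a - b) ^ 2 * (((k : ℝ) + 1) ^ 2 * taylorKernel (deriv (deriv W)) δ P ((b - a) * (k + 1))
          - ((n : ℝ) + 2) ^ 2 / 2 * taylorKernel (deriv (deriv W)) δ P ((b - a) * (n + 2)))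
        + (b - a) * deriv W P * (((k : ℝ) + 1) - ((n : ℝ) + 2) / 2) := by
    intro k hk
    have hkn : k ≤ n := Nat.lt_succ_iff.1 (Finset.mem_range.1 hk)
    have hk' : (k : ℝ) ≤ n := by exact_mod_cast hkn
    have e₁ : b * ((k : ℝ) + 1) + a * (((n - k : ℕ) : ℝ) + 1) = P + (b - a) * (k + 1) := by
      rw [Nat.cast_sub hkn]; ring
    have e₂ : a * ((k : ℝ) + ((n - k : ℕ) : ℝ) + 2) = P := by rw [Nat.cast_sub hkn]; ring
    have e₃ : b * ((k : ℝ) + ((n - k : ℕ) : ℝ) + 2) = P + (b - a) * (n + 2) := by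
      rw [Nat.cast_sub hkn]; ring
    simp only [jSummand, e₁, e₂, e₃]
    rw [htaylor _ (by positivity) (by linarith), htaylor _ (by positivity) le_rfl]
    ring
  have hlinear : ∑ k ∈ Finset.range (n + 1), (((k : ℝ) + 1) - ((n : ℝ) + 2) / 2) = 0 := by
    rw [Finset.sum_sub_distrib, sum_range_succ_natCast_add_one, Finset.sum_const,
      Finset.card_range, nsmul_eq_mul]
    push_cast
    ring
  rw [Finset.Nat.sum_antidiagonal_eq_sum_range_succ_mk, Finset.sum_congr rfl hterm,
    Finset.sum_add_distrib, ← Finset.mul_sum, ← Finset.mul_sum, hlinear, mul_zero, add_zero]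
  rfl

lemma tsum_prod_comp_add {f : ℕ → ℝ} (hf : Summable fun p : ℕ × ℕ => f (p.1 + p.2)) :
    ∑' p : ℕ × ℕ, f (p.1 + p.2) = ∑' n : ℕ, ((n : ℝ) + 1) * f n := by
  rw [tsum_eq_tsum_sum_antidiagonal hf]
  refine tsum_congr fun n => ?_
  rw [Finset.sum_congr rfl fun p hp => by rw [Finset.HasAntidiagonal.mem_antidiagonal.1 hp],
    Finset.sum_const, Finset.Nat.card_antidiagonal, nsmul_eq_mul]
  push_cast
  ring

lemma summable_comp_of_le {W : ℝ → ℝ} {ε α M : ℝ} (hε : 0 < ε) (hα : 2 < α)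
    (hM₀ : 0 ≤ M) (hM : ∀ s t, ε ≤ s → s ≤ t → |W t| ≤ M * s ^ (-α))
    {x : ℕ × ℕ → ℝ}
    (hx : ∀ p : ℕ × ℕ, ε * (p.1 + p.2 + 2) ≤ x p) : Summable fun p => W (x p) := by
  refine summable_of_abs_le_antidiagonal (v := fun n => M * (ε * ((n : ℝ) + 2)) ^ (-α))
    (fun p => hM _ _ ?_ (by simpa using hx p)) ?_
  · have : (0 : ℝ) ≤ ((p.1 + p.2 : ℕ) : ℝ) := Nat.cast_nonneg _
    nlinarith
  · refine Summable.of_nonneg_of_le (fun n => by positivity) (fun n => ?_)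
      ((summable_pow_mul_rpow_neg (k := 1) (β := α) hε (by push_cast; linarith)).mul_left M)
    have : 0 ≤ M * (ε * ((n : ℝ) + 2)) ^ (-α) := by positivity
    simp only [pow_one]
    nlinarith

lemma two_mul_Jfun_eq_tsum_jSummand {W : ℝ → ℝ} {a b : ℝ}
    (hab : Summable fun p : ℕ × ℕ => W (b * (p.1 + 1) + a * (p.2 + 1)))
    (ha : Summable fun p : ℕ × ℕ => W (a * (p.1 + p.2 + 2)))
    (hb : Summable fun p : ℕ × ℕ => W (b * (p.1 + p.2 + 2))) :
    2 * Jfun W a b = ∑' p, jSummand W a b p := by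
  have hdiag : ∀ c : ℝ, Summable (fun p : ℕ × ℕ => W (c * (p.1 + p.2 + 2))) →
      ∑' p : ℕ × ℕ, W (c * (p.1 + p.2 + 2))
        = ∑' n : ℕ, ((n : ℝ) + 1) * W (c * (n + 2)) :=
    fun c hc => by
      simpa using tsum_prod_comp_add (f := fun n : ℕ => W (c * (n + 2))) (by simpa using hc)
  simp only [jSummand]
  rw [hab.tsum_sub ((ha.add hb).div_const 2), tsum_div_const, ha.tsum_add hb,
    hdiag a ha, hdiag b hb, Jfun]
  ring

lemma Afun_eq_tsum_gTerm (W : ℝ → ℝ) {δ a : ℝ} (hδ : 0 ≤ δ) (ha : δ ≤ a) :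
    Afun W a = ∑' n, gTerm (deriv (deriv W)) δ n a a := by
  rw [Afun, ← tsum_mul_left]
  refine tsum_congr fun n => ?_
  rw [gTerm_self (by nlinarith [(n.cast_nonneg : (0 : ℝ) ≤ n)])]
  ring

theorem quotient_eq_tsum_gTerm {W : ℝ → ℝ} (hW : ContDiffOn ℝ 2 W (Ioi 0)) {ε α M : ℝ}
    (hε : 0 < ε) (hα : 2 < α) (hM₀ : 0 ≤ M)
    (hM : ∀ s t, ε ≤ s → s ≤ t → |W t| ≤ M * s ^ (-α))
    {a b : ℝ} (ha : ε ≤ a) (hb : ε ≤ b) :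
    (if a = b then Afun W a else 2 * Jfun W a b / (a - b) ^ 2)
      = ∑' n, gTerm (deriv (deriv W)) ε n a b := by
  split_ifs with hab
  · subst hab
    exact Afun_eq_tsum_gTerm W hε.le ha
  have hcast (p : ℕ × ℕ) : (0 : ℝ) ≤ p.1 ∧ (0 : ℝ) ≤ p.2 :=
    ⟨p.1.cast_nonneg, p.2.cast_nonneg⟩
  have hab' := summable_comp_of_le hε hα hM₀ hM
    (x := fun p => b * (p.1 + 1) + a * (p.2 + 1)) fun p => by nlinarith [hcast p]
  have ha' := summable_comp_of_le hε hα hM₀ hM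
    (x := fun p => a * (p.1 + p.2 + 2)) fun p => by nlinarith [hcast p]
  have hb' := summable_comp_of_le hε hα hM₀ hM
    (x := fun p => b * (p.1 + p.2 + 2)) fun p => by nlinarith [hcast p]
  have hJ : Summable (jSummand W a b) := hab'.sub ((ha'.add hb').div_const 2)
  rw [two_mul_Jfun_eq_tsum_jSummand hab' ha' hb', tsum_eq_tsum_sum_antidiagonal hJ,
    tsum_congr (sum_antidiagonal_jSummand hW hε ha hb), tsum_mul_left,
    mul_div_cancel_left₀ _ (pow_ne_zero 2 (sub_ne_zero.2 hab))]

lemma continuousOn_tsum_gTerm {D : ℝ → ℝ} {ε β M : ℝ} (hε : 0 < ε) (hβ : 4 < β)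
    (hD : ContinuousOn D (Ici ε))
    (hM : ∀ s t, ε ≤ s → s ≤ t → |D t| ≤ M * s ^ (-β)) :
    ContinuousOn (fun q : ℝ × ℝ => ∑' n, gTerm D ε n q.1 q.2) (Ici ε ×ˢ Ici ε) := by
  refine continuousOn_tsum (fun n => (continuous_gTerm hD n).continuousOn)
    ((summable_pow_mul_rpow_neg (k := 3) hε (by push_cast; linarith)).mul_left (2 * M))
    fun n q hq => ?_
  have hn : ε ≤ ε * ((n : ℝ) + 2) := by nlinarith [(n.cast_nonneg : (0 : ℝ) ≤ n)]
  rw [Real.norm_eq_abs]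
  refine (abs_gTerm_le hn hq.1 hq.2 fun t ht => hM _ t hn ht).trans_eq ?_
  ring

theorem stmt13_general (W : ℝ → ℝ) (hW : ContDiffOn ℝ 2 W (Set.Ioi 0))
    (C R α : ℝ) (hα : 2 < α)
    (hW0 : ∀ t : ℝ, R ≤ t → |W t| ≤ C * t ^ (-α))
    (hW2 : ∀ t : ℝ, R ≤ t → |deriv (deriv W) t| ≤ C * t ^ (-α - 2)) :
    ContinuousOn
      (fun x : ℝ × ℝ =>
        if x.1 = x.2 then Afun W x.1 else 2 * Jfun W x.1 x.2 / (x.1 - x.2) ^ 2)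
      (Set.Ioi 0 ×ˢ Set.Ioi 0) := by
  have hD : ContinuousOn (deriv (deriv W)) (Ioi 0) :=
    (hW.deriv_of_isOpen isOpen_Ioi (by norm_num)).continuousOn_deriv_of_isOpen isOpen_Ioi le_rfl
  rintro ⟨a, b⟩ ⟨ha : 0 < a, hb : 0 < b⟩
  obtain ⟨ε, hε, hεa, hεb⟩ : ∃ ε, 0 < ε ∧ ε < a ∧ ε < b :=
    ⟨min a b / 2, by simp_all, by linarith [min_le_left a b], by linarith [min_le_right a b]⟩
  have hIci : Ici ε ⊆ Ioi 0 := Ici_subset_Ioi.2 hε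
  obtain ⟨MW, hMW₀, hMW⟩ :=
    exists_abs_le_mul_rpow_neg hε (by linarith) (hW.continuousOn.mono hIci) hW0
  obtain ⟨MD, -, hMD⟩ := exists_abs_le_mul_rpow_neg (β := α + 2) hε (by linarith)
    (hD.mono hIci) fun t ht => by simpa only [neg_add'] using hW2 t ht
  have hG := (continuousOn_tsum_gTerm hε (by linarith) (hD.mono hIci) hMD).congr
    fun q hq => quotient_eq_tsum_gTerm hW hε hα hMW₀ hMW hq.1 hq.2
  exact (hG.continuousAt (prod_mem_nhds (Ici_mem_nhds hεa) (Ici_mem_nhds hεb))).continuousWithinAt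

/-- the function `G(a,b) := 2J(a,b)/(a−b)²` for `a ≠ b`,
`G(a,a) := A(a)`, is continuous on `(0,∞)²`. -/
theorem stmt13 (W : ℝ → ℝ) (hW : ContDiffOn ℝ 2 W (Set.Ioi 0))
    (C R α : ℝ) (hC : 0 < C) (hR : 0 < R) (hα : 2 < α)
    (hW0 : ∀ t : ℝ, R ≤ t → |W t| ≤ C * t ^ (-α))
    (hW1 : ∀ t : ℝ, R ≤ t → |deriv W t| ≤ C * t ^ (-α - 1))
    (hW2 : ∀ t : ℝ, R ≤ t → |deriv (deriv W) t| ≤ C * t ^ (-α - 2)) :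
    ContinuousOn
      (fun x : ℝ × ℝ =>
        if x.1 = x.2 then Afun W x.1 else 2 * Jfun W x.1 x.2 / (x.1 - x.2) ^ 2)
      (Set.Ioi 0 ×ˢ Set.Ioi 0) :=
  stmt13_general W hW C R α hα hW0 hW2
end

section
/- Let σ > 0, let W_σ be the Lennard-Jones potential, and let F_2 be defined with W = W_σ, so that F_2(a,a;·) is a function of one variable x_1 ∈ (0,1). Then for a > 0, the second derivative of x_1 ↦ F_2(a,a;x_1) at x_1 = 1/2 is positive if and only if a/σ < (8/2079)^{1/6}·π. -/
/-!
Writing `F(y) := F₂(a,a;y)`, the two series in `F` pair up into the terms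
`W(a(n+2y)) + W(a(n+2-2y))`, which are exchanged by the reflection `y ↦ 1 - y`.
Away from `y ∈ {0, 1}` all arguments grow linearly in `n`, so for a potential which, together
with its first two derivatives, decays like `t⁻²`, the series may be differentiated twice
termwise, giving `F''(1/2) = 8 a² ∑_{k ≥ 1} W''(a k)`. For `W = W_σ`, `W''(t) = 156 σ¹²/t¹⁴ - 42 σ⁶/t⁸`, so
this is a combination of `ζ(14) = 2π¹⁴/18243225` and `ζ(8) = π⁸/9450`, and it factors as
`8σ⁶π⁸/(225 a¹²) · ((8/2079) π⁶ σ⁶ - a⁶)`.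
-/

open Real Filter Set Topology

/-- The Lennard-Jones potential `W_σ(t) = (σ/t)^12 − (σ/t)^6`. -/
noncomputable def LJ (σ : ℝ) : ℝ → ℝ := fun t => (σ / t) ^ 12 - (σ / t) ^ 6

/-- `F_m(a,b;x)` as in the optimal profile problem. -/
noncomputable def Fm (W : ℝ → ℝ) (m : ℕ) (a b : ℝ) (x : Fin (m - 1) → ℝ) : ℝ :=
  (∑' i : ℕ, ∑ j : Fin (m - 1),
      (W (b * (m : ℝ) * x j + a * (i : ℝ)) -
        W (b * (((j : ℕ) : ℝ) + 1) + a * (i : ℝ))))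
  + (∑ i : Fin (m - 1), ∑ j : Fin (m - 1),
      if (i : ℕ) < (j : ℕ) then W (b * (m : ℝ) * (x j - x i)) else 0)
  + (∑ i : Fin (m - 1), ∑' j : ℕ,
      W (b * (((j : ℝ) + (m : ℝ)) - (m : ℝ) * x i)))
  - ((m : ℝ) - 1) * ∑' j : ℕ, W (b * ((j : ℝ) + 1))

open Nat in
theorem hasSum_one_div_nat_add_one_pow_two_mul {k : ℕ} (hk : k ≠ 0) :
    HasSum (fun n : ℕ => 1 / ((n : ℝ) + 1) ^ (2 * k))
      ((-1 : ℝ) ^ (k + 1) * 2 ^ (2 * k - 1) * π ^ (2 * k) * bernoulli (2 * k) / (2 * k)!) := by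
  -- the `n = 0` term of `hasSum_zeta_nat` is the junk value `1 / 0 = 0`
  simpa [hk] using (hasSum_nat_add_iff' 1).mpr (hasSum_zeta_nat hk)

theorem summable_one_div_nat_add_one_sq : Summable fun n : ℕ => 1 / ((n : ℝ) + 1) ^ 2 :=
  (hasSum_one_div_nat_add_one_pow_two_mul one_ne_zero).summable

def DecaysInvSq (g : ℝ → ℝ) : Prop := ∀ c > 0, ∃ C, ∀ t, c ≤ t → |g t| ≤ C / t ^ 2

theorem DecaysInvSq.sub {f g : ℝ → ℝ} (hf : DecaysInvSq f) (hg : DecaysInvSq g) :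
    DecaysInvSq fun t => f t - g t := by
  intro c hc
  obtain ⟨C, hC⟩ := hf c hc
  obtain ⟨D, hD⟩ := hg c hc
  refine ⟨C + D, fun t ht => ?_⟩
  calc |f t - g t| ≤ |f t| + |g t| := abs_sub _ _
    _ ≤ C / t ^ 2 + D / t ^ 2 := add_le_add (hC t ht) (hD t ht)
    _ = (C + D) / t ^ 2 := by ring

theorem decaysInvSq_const_div_pow (A : ℝ) {p : ℕ} (hp : 2 ≤ p) :
    DecaysInvSq fun t => A / t ^ p := by
  intro c hc
  refine ⟨|A| / c ^ (p - 2), fun t ht => ?_⟩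
  have ht0 : 0 < t := hc.trans_le ht
  obtain ⟨q, rfl⟩ := Nat.exists_eq_add_of_le hp
  rw [abs_div, abs_of_pos (pow_pos ht0 _), Nat.add_sub_cancel_left, div_div, pow_add, mul_comm]
  gcongr

theorem DecaysInvSq.exists_summable_bound {g : ℝ → ℝ} (hg : DecaysInvSq g) {c : ℝ} (hc : 0 < c) :
    ∃ u : ℕ → ℝ, Summable u ∧ ∀ (n : ℕ) (t : ℝ), c * (n + 1) ≤ t → |g t| ≤ u n := by
  obtain ⟨C, hC⟩ := hg c hc
  have hC0 : 0 ≤ C := by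
    by_contra! hneg
    linarith [(abs_nonneg _).trans (hC c le_rfl), div_neg_of_neg_of_pos hneg (pow_pos hc 2)]
  refine ⟨fun n => C / c ^ 2 * (1 / ((n : ℝ) + 1) ^ 2), summable_one_div_nat_add_one_sq.mul_left _,
    fun n t ht => ?_⟩
  have hcn : 0 < c * (n + 1) := by positivity
  calc |g t| ≤ C / t ^ 2 := hC t (le_trans (by nlinarith) ht)
    _ ≤ C / (c * (n + 1)) ^ 2 := by gcongr
    _ = C / c ^ 2 * (1 / ((n : ℝ) + 1) ^ 2) := by field_simp

theorem hasDerivAt_deriv_tsum_of_isPreconnected {α 𝕜 F : Type*} [NontriviallyNormedField 𝕜]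
    [IsRCLikeNormedField 𝕜] [NormedAddCommGroup F] [NormedSpace 𝕜 F] [CompleteSpace F]
    {f f' f'' : α → 𝕜 → F} {u v : α → ℝ} {s : Set 𝕜} {x₀ x : 𝕜}
    (hu : Summable u) (hv : Summable v) (hs : IsOpen s) (h's : IsPreconnected s)
    (hf : ∀ n y, y ∈ s → HasDerivAt (f n) (f' n y) y)
    (hf' : ∀ n y, y ∈ s → HasDerivAt (f' n) (f'' n y) y)
    (hf'u : ∀ n y, y ∈ s → ‖f' n y‖ ≤ u n) (hf''v : ∀ n y, y ∈ s → ‖f'' n y‖ ≤ v n)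
    (hx₀ : x₀ ∈ s) (hf0 : Summable (f · x₀)) (hx : x ∈ s) :
    HasDerivAt (deriv fun y => ∑' n, f n y) (∑' n, f'' n x) x := by
  have hderiv : deriv (fun y => ∑' n, f n y) =ᶠ[𝓝 x] fun y => ∑' n, f' n y :=
    eventually_of_mem (hs.mem_nhds hx) fun y hy =>
      (hasDerivAt_tsum_of_isPreconnected hu hs h's hf hf'u hx₀ hf0 hy).deriv
  exact (hasDerivAt_tsum_of_isPreconnected hv hs h's hf' hf''v hx₀
    (.of_norm_bounded hu fun n => hf'u n x₀ hx₀) hx).congr_of_eventuallyEq hderiv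

theorem hasDerivAt_const_div_pow (A : ℝ) (p : ℕ) {t : ℝ} (ht : t ≠ 0) :
    HasDerivAt (fun t => A / t ^ p) (-(p * A) / t ^ (p + 1)) t := by
  refine ((hasDerivAt_const t A).div (hasDerivAt_pow p t) (pow_ne_zero p ht)).congr_deriv ?_
  rcases p with _ | p
  · simp
  · rw [Nat.add_sub_cancel]
    field_simp
    ring

theorem hasDerivAt_const_div_pow_sub {A B : ℝ} {p q : ℕ} {t : ℝ} (ht : t ≠ 0) :
    HasDerivAt (fun t => A / t ^ p - B / t ^ q) (q * B / t ^ (q + 1) - p * A / t ^ (p + 1)) t := by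
  refine ((hasDerivAt_const_div_pow A p ht).sub (hasDerivAt_const_div_pow B q ht)).congr_deriv ?_
  ring

theorem LJ_eq (σ : ℝ) : LJ σ = fun t => σ ^ 12 / t ^ 12 - σ ^ 6 / t ^ 6 := by
  funext t
  simp only [LJ, div_pow]

theorem Fm_two (W : ℝ → ℝ) (a x : ℝ) :
    Fm W 2 a a (fun _ => x) = ∑' n : ℕ, (W (a * (2 * x + n)) - W (a * (n + 1)))
      + ∑' n : ℕ, W (a * (n + 2 - 2 * x)) - ∑' n : ℕ, W (a * (n + 1)) := by
  simp only [Fm]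
  norm_num
  ring_nf

section Mirror

variable (g : ℝ → ℝ) (a : ℝ) (n : ℕ) (y : ℝ)

def mirrorSum : ℝ := g (a * (2 * y + n)) + g (a * (n + 2 - 2 * y))

def mirrorDiff : ℝ := g (a * (2 * y + n)) - g (a * (n + 2 - 2 * y))

variable {g a n y} {g' : ℝ → ℝ}

theorem hasDerivAt_mirror_args (hg : ∀ t, 0 < t → HasDerivAt g (g' t) t)
    (h₁ : 0 < a * (2 * y + n)) (h₂ : 0 < a * (n + 2 - 2 * y)) :
    HasDerivAt (fun y => g (a * (2 * y + n))) (2 * a * g' (a * (2 * y + n))) y ∧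
      HasDerivAt (fun y => g (a * (n + 2 - 2 * y))) (-(2 * a) * g' (a * (n + 2 - 2 * y))) y := by
  constructor
  · exact ((hg _ h₁).comp y ((((hasDerivAt_id y).const_mul 2).add_const (n : ℝ)).const_mul a)
      ).congr_deriv (by ring)
  · exact ((hg _ h₂).comp y ((((hasDerivAt_id y).const_mul 2).const_sub ((n : ℝ) + 2)).const_mul
      a)).congr_deriv (by ring)

theorem hasDerivAt_mirrorSum (hg : ∀ t, 0 < t → HasDerivAt g (g' t) t)
    (h₁ : 0 < a * (2 * y + n)) (h₂ : 0 < a * (n + 2 - 2 * y)) :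
    HasDerivAt (mirrorSum g a n) (2 * a * mirrorDiff g' a n y) y := by
  obtain ⟨d₁, d₂⟩ := hasDerivAt_mirror_args hg h₁ h₂
  exact (d₁.add d₂).congr_deriv (by simp only [mirrorDiff]; ring)

theorem hasDerivAt_mirrorDiff (hg : ∀ t, 0 < t → HasDerivAt g (g' t) t)
    (h₁ : 0 < a * (2 * y + n)) (h₂ : 0 < a * (n + 2 - 2 * y)) :
    HasDerivAt (mirrorDiff g a n) (2 * a * mirrorSum g' a n y) y := by
  obtain ⟨d₁, d₂⟩ := hasDerivAt_mirror_args hg h₁ h₂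
  exact (d₁.sub d₂).congr_deriv (by simp only [mirrorSum]; ring)

end Mirror

section SecondDerivative

variable {W W' W'' : ℝ → ℝ} {a : ℝ}

theorem Fm_two_eq_tsum_mirrorSum {x : ℝ}
    (h₁ : Summable fun n : ℕ => W (a * (2 * x + n)) - W (a * (n + 1)))
    (h₂ : Summable fun n : ℕ => W (a * (n + 2 - 2 * x))) :
    Fm W 2 a a (fun _ => x) =
      ∑' n : ℕ, (mirrorSum W a n x - W (a * (n + 1))) - ∑' n : ℕ, W (a * (n + 1)) := by
  rw [Fm_two, ← h₁.tsum_add h₂]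
  congr 1
  refine tsum_congr fun n => ?_
  simp only [mirrorSum]
  ring

theorem le_mirror_args {δ y : ℝ} (hy : y ∈ Ioo δ (1 - δ)) (ha : 0 < a) (n : ℕ) :
    2 * a * δ * (n + 1) ≤ a * (2 * y + n) ∧ 2 * a * δ * (n + 1) ≤ a * (n + 2 - 2 * y) ∧
      2 * a * δ * (n + 1) ≤ a * (n + 1) := by
  obtain ⟨hy₁, hy₂⟩ := hy
  have hn : 0 ≤ (n : ℝ) * (1 - 2 * δ) := mul_nonneg n.cast_nonneg (by linarith)
  simp only [mul_assoc 2 a, mul_left_comm 2 a, mul_assoc a]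
  refine ⟨?_, ?_, ?_⟩ <;> gcongr <;> linarith

theorem mirror_args_pos {δ y : ℝ} (hδ : 0 < δ) (hy : y ∈ Ioo δ (1 - δ)) (ha : 0 < a) (n : ℕ) :
    0 < a * (2 * y + n) ∧ 0 < a * (n + 2 - 2 * y) := by
  have hcn : 0 < 2 * a * δ * (n + 1) := by positivity
  obtain ⟨h₁, h₂, -⟩ := le_mirror_args hy ha n
  exact ⟨hcn.trans_le h₁, hcn.trans_le h₂⟩

theorem DecaysInvSq.summable_mirror (h₀ : DecaysInvSq W) {δ y : ℝ} (hδ : 0 < δ) (ha : 0 < a)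
    (hy : y ∈ Ioo δ (1 - δ)) :
    (Summable fun n : ℕ => W (a * (2 * y + n)) - W (a * (n + 1))) ∧
      Summable fun n : ℕ => W (a * (n + 2 - 2 * y)) := by
  obtain ⟨u, hu, hb⟩ := h₀.exists_summable_bound (by positivity : 0 < 2 * a * δ)
  refine ⟨.of_norm_bounded (hu.add hu) fun n => (abs_sub _ _).trans (add_le_add ?_ ?_),
    .of_norm_bounded hu fun n => hb n _ (le_mirror_args hy ha n).2.1⟩
  exacts [hb n _ (le_mirror_args hy ha n).1, hb n _ (le_mirror_args hy ha n).2.2]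

theorem DecaysInvSq.summable_mirrorSum_sub (h₀ : DecaysInvSq W) {δ y : ℝ} (hδ : 0 < δ)
    (ha : 0 < a) (hy : y ∈ Ioo δ (1 - δ)) :
    Summable fun n : ℕ => mirrorSum W a n y - W (a * (n + 1)) := by
  obtain ⟨h₁, h₂⟩ := h₀.summable_mirror hδ ha hy
  exact (h₁.add h₂).congr fun n => by simp only [mirrorSum]; ring

theorem abs_mirror_le {g : ℝ → ℝ} {u : ℕ → ℝ} {δ y : ℝ} (ha : 0 < a)
    (hg : ∀ (n : ℕ) (t : ℝ), 2 * a * δ * (n + 1) ≤ t → |g t| ≤ u n) (hy : y ∈ Ioo δ (1 - δ))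
    (n : ℕ) : |mirrorSum g a n y| ≤ 2 * u n ∧ |mirrorDiff g a n y| ≤ 2 * u n := by
  obtain ⟨h₁, h₂, -⟩ := le_mirror_args hy ha n
  have hb₁ := hg n _ h₁
  have hb₂ := hg n _ h₂
  exact ⟨(abs_add_le _ _).trans (by linarith), (abs_sub _ _).trans (by linarith)⟩

theorem hasDerivAt_deriv_Fm_two (hW : ∀ t, 0 < t → HasDerivAt W (W' t) t)
    (hW' : ∀ t, 0 < t → HasDerivAt W' (W'' t) t) (h₀ : DecaysInvSq W) (h₁ : DecaysInvSq W')
    (h₂ : DecaysInvSq W'') (ha : 0 < a) {x : ℝ} (hx : x ∈ Ioo (0 : ℝ) 1) :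
    HasDerivAt (deriv fun y => Fm W 2 a a fun _ => y)
      (4 * a ^ 2 * ∑' n : ℕ, mirrorSum W'' a n x) x := by
  obtain ⟨δ, hδ, hxδ⟩ : ∃ δ > 0, x ∈ Ioo δ (1 - δ) := by
    obtain ⟨hx₀, hx₁⟩ := hx
    refine ⟨min x (1 - x) / 2, by positivity, ?_, ?_⟩ <;>
      linarith [min_le_left x (1 - x), min_le_right x (1 - x)]
  have hc : 0 < 2 * a * δ := by positivity
  obtain ⟨u₁, hu₁, hb₁⟩ := h₁.exists_summable_bound hc
  obtain ⟨u₂, hu₂, hb₂⟩ := h₂.exists_summable_bound hc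
  have hF : (fun y => Fm W 2 a a fun _ => y) =ᶠ[𝓝 x]
      fun y => ∑' n : ℕ, (mirrorSum W a n y - W (a * (n + 1))) - ∑' n : ℕ, W (a * (n + 1)) := by
    filter_upwards [isOpen_Ioo.mem_nhds hxδ] with y hy
    obtain ⟨h₁, h₂⟩ := h₀.summable_mirror hδ ha hy
    exact Fm_two_eq_tsum_mirrorSum h₁ h₂
  have hseries := hasDerivAt_deriv_tsum_of_isPreconnected
    (f := fun n y => mirrorSum W a n y - W (a * (n + 1)))
    (f' := fun n y => 2 * a * mirrorDiff W' a n y)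
    (f'' := fun n y => 2 * a * (2 * a * mirrorSum W'' a n y))
    ((hu₁.mul_left 2).mul_left (2 * a)) (((hu₂.mul_left 2).mul_left (2 * a)).mul_left (2 * a))
    isOpen_Ioo isPreconnected_Ioo
    (fun n y hy => (hasDerivAt_mirrorSum hW (mirror_args_pos hδ hy ha n).1
      (mirror_args_pos hδ hy ha n).2).sub_const _)
    (fun n y hy => (hasDerivAt_mirrorDiff hW' (mirror_args_pos hδ hy ha n).1
      (mirror_args_pos hδ hy ha n).2).const_mul _)
    (fun n y hy => by
      rw [Real.norm_eq_abs, abs_mul, abs_of_pos (by positivity)]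
      gcongr
      exact (abs_mirror_le ha hb₁ hy n).2)
    (fun n y hy => by
      rw [Real.norm_eq_abs, abs_mul, abs_mul (2 * a), abs_of_pos (by positivity : 0 < 2 * a)]
      gcongr
      exact (abs_mirror_le ha hb₂ hy n).1)
    hxδ (h₀.summable_mirrorSum_sub hδ ha hxδ) hxδ
  refine (hseries.congr_of_eventuallyEq ?_).congr_deriv ?_
  · filter_upwards [hF.deriv] with y hy
    rw [hy, deriv_sub_const]
  · rw [tsum_mul_left, tsum_mul_left]
    ring

theorem deriv_deriv_Fm_two_half (hW : ∀ t, 0 < t → HasDerivAt W (W' t) t)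
    (hW' : ∀ t, 0 < t → HasDerivAt W' (W'' t) t) (h₀ : DecaysInvSq W) (h₁ : DecaysInvSq W')
    (h₂ : DecaysInvSq W'') (ha : 0 < a) :
    deriv (deriv fun y => Fm W 2 a a fun _ => y) (1 / 2) =
      8 * a ^ 2 * ∑' n : ℕ, W'' (a * (n + 1)) := by
  rw [(hasDerivAt_deriv_Fm_two hW hW' h₀ h₁ h₂ ha ⟨by norm_num, by norm_num⟩).deriv]
  have hmid : ∀ n : ℕ, mirrorSum W'' a n (1 / 2) = 2 * W'' (a * (n + 1)) := fun n => by
    simp only [mirrorSum]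
    ring_nf
  rw [tsum_congr hmid, tsum_mul_left]
  ring

end SecondDerivative

theorem bernoulli'_six : bernoulli' 6 = 1 / 42 := by
  rw [bernoulli'_def]
  simp (disch := decide) [Finset.sum_range_succ, bernoulli'_eq_zero_of_odd, Nat.choose]
  norm_num

theorem bernoulli'_eight : bernoulli' 8 = -1 / 30 := by
  rw [bernoulli'_def]
  simp (disch := decide) [Finset.sum_range_succ, bernoulli'_eq_zero_of_odd, bernoulli'_six,
    Nat.choose]
  norm_num

theorem bernoulli'_ten : bernoulli' 10 = 5 / 66 := by
  rw [bernoulli'_def]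
  simp (disch := decide) [Finset.sum_range_succ, bernoulli'_eq_zero_of_odd, bernoulli'_six,
    bernoulli'_eight, Nat.choose]
  norm_num

theorem bernoulli'_twelve : bernoulli' 12 = -691 / 2730 := by
  rw [bernoulli'_def]
  simp (disch := decide) [Finset.sum_range_succ, bernoulli'_eq_zero_of_odd, bernoulli'_six,
    bernoulli'_eight, bernoulli'_ten, Nat.choose]
  norm_num

theorem bernoulli'_fourteen : bernoulli' 14 = 7 / 6 := by
  rw [bernoulli'_def]
  simp (disch := decide) [Finset.sum_range_succ, bernoulli'_eq_zero_of_odd, bernoulli'_six,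
    bernoulli'_eight, bernoulli'_ten, bernoulli'_twelve, Nat.choose]
  norm_num

theorem hasSum_one_div_nat_add_one_pow_eight :
    HasSum (fun n : ℕ => 1 / ((n : ℝ) + 1) ^ 8) (π ^ 8 / 9450) := by
  convert hasSum_one_div_nat_add_one_pow_two_mul (k := 4) (by norm_num) using 1
  rw [bernoulli_eq_bernoulli'_of_ne_one (by norm_num), bernoulli'_eight]
  norm_num [Nat.factorial]
  ring

theorem hasSum_one_div_nat_add_one_pow_fourteen :
    HasSum (fun n : ℕ => 1 / ((n : ℝ) + 1) ^ 14) (2 * π ^ 14 / 18243225) := by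
  convert hasSum_one_div_nat_add_one_pow_two_mul (k := 7) (by norm_num) using 1
  rw [bernoulli_eq_bernoulli'_of_ne_one (by norm_num), bernoulli'_fourteen]
  norm_num [Nat.factorial]
  ring

theorem deriv_deriv_Fm_two_LJ_half (σ : ℝ) {a : ℝ} (ha : 0 < a) :
    deriv (deriv fun y => Fm (LJ σ) 2 a a fun _ => y) (1 / 2) =
      8 * σ ^ 6 * π ^ 8 / (225 * a ^ 12) * (8 / 2079 * π ^ 6 * σ ^ 6 - a ^ 6) := by
  have hdecay : ∀ {A B : ℝ} {p q : ℕ}, 2 ≤ p → 2 ≤ q → DecaysInvSq fun t => A / t ^ p - B / t ^ q :=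
    fun hp hq => (decaysInvSq_const_div_pow _ hp).sub (decaysInvSq_const_div_pow _ hq)
  have hW : ∀ t, 0 < t → HasDerivAt (LJ σ) (6 * σ ^ 6 / t ^ 7 - 12 * σ ^ 12 / t ^ 13) t :=
    fun t ht => by
      rw [LJ_eq]
      exact (hasDerivAt_const_div_pow_sub ht.ne').congr_deriv (by norm_num)
  have hW' : ∀ t, 0 < t → HasDerivAt (fun t => 6 * σ ^ 6 / t ^ 7 - 12 * σ ^ 12 / t ^ 13)
      (156 * σ ^ 12 / t ^ 14 - 42 * σ ^ 6 / t ^ 8) t :=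
    fun t ht => (hasDerivAt_const_div_pow_sub ht.ne').congr_deriv (by push_cast; ring)
  rw [deriv_deriv_Fm_two_half hW hW' (LJ_eq σ ▸ hdecay (by norm_num) (by norm_num))
    (hdecay (by norm_num) (by norm_num)) (hdecay (by norm_num) (by norm_num)) ha]
  have hterm : ∀ n : ℕ, 156 * σ ^ 12 / (a * (n + 1)) ^ 14 - 42 * σ ^ 6 / (a * (n + 1)) ^ 8 =
      156 * σ ^ 12 / a ^ 14 * (1 / ((n : ℝ) + 1) ^ 14)
        - 42 * σ ^ 6 / a ^ 8 * (1 / ((n : ℝ) + 1) ^ 8) := fun n => by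
    rw [mul_pow, mul_pow]
    field_simp
  have h₈ := hasSum_one_div_nat_add_one_pow_eight
  have h₁₄ := hasSum_one_div_nat_add_one_pow_fourteen
  rw [tsum_congr hterm, ((h₁₄.mul_left _).sub (h₈.mul_left _)).tsum_eq]
  field_simp
  ring

theorem pow_lt_mul_pow_iff_lt_rpow_mul {x y c : ℝ} {n : ℕ} (hn : n ≠ 0) (hx : 0 ≤ x) (hy : 0 ≤ y)
    (hc : 0 ≤ c) : x ^ n < c * y ^ n ↔ x < c ^ ((1 : ℝ) / n) * y := by
  rw [← pow_lt_pow_iff_left₀ hx (by positivity) hn, mul_pow, one_div,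
    Real.rpow_inv_natCast_pow hc hn]

/-- for the Lennard-Jones potential, the second derivative of
`x₁ ↦ F₂(a,a;x₁)` at `x₁ = 1/2` is positive if and only if
`a/σ < (8/2079)^{1/6} π`. -/
theorem stmt19 (σ a : ℝ) (hσ : 0 < σ) (ha : 0 < a) :
    0 < deriv (deriv (fun x : ℝ => Fm (LJ σ) 2 a a (fun _ : Fin (2 - 1) => x))) (1 / 2) ↔
      a / σ < (8 / 2079 : ℝ) ^ ((1 : ℝ) / 6) * π := by
  have hfactor : 0 < 8 * σ ^ 6 * π ^ 8 / (225 * a ^ 12) := by positivity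
  rw [deriv_deriv_Fm_two_LJ_half σ ha, mul_pos_iff_of_pos_left hfactor, sub_pos, div_lt_iff₀ hσ,
    mul_assoc _ π, mul_assoc _ (π ^ 6), ← mul_pow]
  exact_mod_cast pow_lt_mul_pow_iff_lt_rpow_mul (n := 6) (by norm_num) ha.le (by positivity)
    (by norm_num)
end
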